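/- arXiv:1412.5734 — 8 statements merged into one kernel-verified Lean document; each statement's English description precedes it below -/
import Mathlib

section
/- For any positive integers r, m, n, every coefficient of the multivariable polynomial ∑_{k=0}^{n-1} (2k+1) · S_k^{(r)}(x_0,…,x_k)^m (a polynomial in the variables x_0,…,x_{n-1} with integer coefficients) is divisible by n. -/
/-- The multi-variable Schmidt polynomial
`S_n^{(r)}(x_0,…,x_n) := ∑_{k=0}^{n} C(n+k,2k)^r · C(2k,k) · x_k`,
viewed as a polynomial with integer coefficients in variables indexed by `ℕ`. -/
noncomputable def schmidtMv (r n : ℕ) : MvPolynomial ℕ ℤ :=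
  ∑ k ∈ Finset.range (n + 1),
    MvPolynomial.C ((((n + k).choose (2 * k)) ^ r * ((2 * k).choose k) : ℕ) : ℤ) *
      MvPolynomial.X k

/-!
Put `u_s(k) = C(2s,s) C(k+s,2s) = C(k+s,s) C(k,s)` (`schmidtBasis s k`). Telescoping gives
`∑_{k<n} (2k+1) u_s(k) = n C(2s+1,s) C(n+s,2s+1)`, so `n` divides the weighted sum of every
sequence in the `ℤ`-span of the `u_s`. This span is a ring: from
`k(k+1) u_s = (s+1)² u_{s+1} + s(s+1) u_s` one gets by induction on `s`
`u_j u_s = ∑_i C(j+s,s) C(s+i,j) C(j,i) u_{s+i}`. The coefficient `C(2j,j) C(k+j,2j)^r` of `x_j`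
in `S_k^{(r)}` lies in the span as well, because multiplication by `C(k+j,2j)` preserves the
span of the `C(t,j) u_t`, which contains `u_j` and is contained in the span of the `u_s`.
Hence the coefficients of `S_k^{(r)}`, and of its powers, are such sequences in `k`.
-/

open Finset

namespace Nat

theorem choose_two_mul_mul_choose (t j : ℕ) :
    (t + j).choose (2 * j) * (2 * j).choose j = (t + j).choose j * t.choose j := by
  rw [Nat.choose_mul (by omega), show t + j - j = t by omega, show 2 * j - j = j by omega]

theorem cast_add_one_mul_choose_succ (n k : ℕ) :
    ((k : ℤ) + 1) * n.choose (k + 1) = (n - k) * n.choose k := by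
  rcases le_or_gt k n with h | h
  · have := Nat.choose_succ_right_eq n k
    zify [h] at this
    linarith
  · simp [Nat.choose_eq_zero_of_lt h, Nat.choose_eq_zero_of_lt (Nat.lt_succ_of_lt h)]

theorem cast_add_one_mul_choose (n k : ℕ) :
    ((n : ℤ) + 1) * n.choose k = (n + 1 - k) * (n + 1).choose k := by
  rcases le_or_gt k (n + 1) with h | h
  · have := Nat.choose_mul_succ_eq n k
    zify [h] at this
    linarith
  · simp [Nat.choose_eq_zero_of_lt h, Nat.choose_eq_zero_of_lt (Nat.lt_of_succ_lt h)]

theorem cast_add_one_mul_choose_succ_succ (n k : ℕ) :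
    ((k : ℤ) + 1) * (n + 1).choose (k + 1) = (n + 1) * n.choose k := by
  have := Nat.add_one_mul_choose_eq n k
  push_cast [mul_comm] at this ⊢
  linarith

end Nat

def schmidtBasis (s k : ℕ) : ℤ := (2 * s).choose s * (k + s).choose (2 * s)

theorem schmidtBasis_eq_choose_mul_choose (s k : ℕ) :
    schmidtBasis s k = (k + s).choose s * k.choose s := by
  rw [schmidtBasis, mul_comm]
  exact_mod_cast Nat.choose_two_mul_mul_choose k s

@[simp]
theorem schmidtBasis_zero (k : ℕ) : schmidtBasis 0 k = 1 := by
  simp [schmidtBasis]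

theorem mul_schmidtBasis (s k : ℕ) :
    ((k : ℤ) * (k + 1)) * schmidtBasis s k
      = (s + 1) ^ 2 * schmidtBasis (s + 1) k + s * (s + 1) * schmidtBasis s k := by
  have h₁ := Nat.cast_add_one_mul_choose_succ k s
  have h₂ := Nat.cast_add_one_mul_choose_succ_succ (k + s) s
  rw [schmidtBasis_eq_choose_mul_choose, schmidtBasis_eq_choose_mul_choose, ← add_assoc]
  push_cast at h₂ ⊢
  linear_combination -((s : ℤ) + 1) * (k.choose (s + 1) : ℤ) * h₂
    - ((k : ℤ) + s + 1) * ((k + s).choose s : ℤ) * h₁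

theorem sum_two_mul_add_one_mul_schmidtBasis (s n : ℕ) :
    ∑ k ∈ range n, (2 * (k : ℤ) + 1) * schmidtBasis s k
      = n * (2 * s + 1).choose s * (n + s).choose (2 * s + 1) := by
  let V : ℕ → ℤ := fun n => n * (2 * s + 1).choose s * (n + s).choose (2 * s + 1)
  have hstep : ∀ k : ℕ, (2 * (k : ℤ) + 1) * schmidtBasis s k = V (k + 1) - V k := by
    intro k
    have e₁ : ((s : ℤ) + 1) * (2 * s + 1).choose s = (2 * s + 1) * (2 * s).choose s := by
      rw [← Nat.choose_symm_half]
      exact_mod_cast Nat.cast_add_one_mul_choose_succ_succ (2 * s) s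
    have e₂ : ((k + 1 + s).choose (2 * s + 1) : ℤ)
        = (k + s).choose (2 * s) + (k + s).choose (2 * s + 1) := by
      rw [show k + 1 + s = k + s + 1 by omega, Nat.choose_succ_succ', Nat.cast_add]
    have e₃ := Nat.cast_add_one_mul_choose_succ (k + s) (2 * s)
    apply mul_left_cancel₀ (show (s : ℤ) + 1 ≠ 0 by positivity)
    simp only [V, schmidtBasis]
    push_cast at e₃ ⊢
    linear_combination ((k : ℤ) * (k + s).choose (2 * s + 1)
        - ((k : ℤ) + 1) * (k + 1 + s).choose (2 * s + 1)) * e₁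
      - (((k : ℤ) + 1) * (2 * s + 1) * (2 * s).choose s) * e₂
      - ((2 * s).choose s : ℤ) * e₃
  rw [sum_congr rfl fun k _ => hstep k, sum_range_sub]
  simp [V]

def schmidtMulCoeff (j s i : ℕ) : ℤ := (j + s).choose s * (s + i).choose j * j.choose i

theorem schmidtMulCoeff_zero (j i : ℕ) : schmidtMulCoeff j 0 i = if i = j then 1 else 0 := by
  rcases lt_trichotomy i j with h | rfl | h
  · simp [schmidtMulCoeff, Nat.choose_eq_zero_of_lt h, h.ne]
  · simp [schmidtMulCoeff]
  · simp [schmidtMulCoeff, Nat.choose_eq_zero_of_lt h, h.ne']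

theorem schmidtMulCoeff_succ (j s i : ℕ) :
    (s + 1) ^ 2 * schmidtMulCoeff j (s + 1) i
      = (s + i + 1) ^ 2 * schmidtMulCoeff j s i
        + (i + 1) * (2 * s + i + 2) * schmidtMulCoeff j s (i + 1) := by
  have h₁ := Nat.cast_add_one_mul_choose_succ j i
  have h₂ := Nat.cast_add_one_mul_choose (s + i) j
  have h₃ := Nat.cast_add_one_mul_choose_succ_succ (j + s) s
  push_cast at h₂ h₃
  apply mul_left_cancel₀ (show ((i : ℤ) + 1) * (s + i + 1) ≠ 0 by positivity)
  simp only [schmidtMulCoeff, ← add_assoc, show s + 1 + i = s + i + 1 by omega]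
  linear_combination
    (((i : ℤ) + 1) * (s + i + 1) * (s + 1) * (s + i + 1).choose j * j.choose i) * h₃
    - (((i : ℤ) + 1) * ((s : ℤ) + i + 1) ^ 2 * (j + s).choose s * j.choose i) * h₂
    - (((i : ℤ) + 1) * (s + i + 1) * (2 * s + i + 2) * (j + s).choose s * (s + i + 1).choose j) * h₁

theorem schmidtBasis_mul_schmidtBasis (j s k : ℕ) :
    schmidtBasis j k * schmidtBasis s k
      = ∑ i ∈ range (j + 1), schmidtMulCoeff j s i * schmidtBasis (s + i) k := by
  induction s with
  | zero =>
    simp [schmidtMulCoeff_zero]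
  | succ s ih =>
    let x : ℤ := k * (k + 1)
    -- the terms with `i = 0` and `i = j + 1` vanish, so the second sum may be shifted by one
    have hshift : ∑ i ∈ range (j + 1), (i : ℤ) * (2 * s + i + 1) * schmidtMulCoeff j s i
          * schmidtBasis (s + i) k
        = ∑ i ∈ range (j + 1), ((i : ℤ) + 1) * (2 * s + i + 2) * schmidtMulCoeff j s (i + 1)
          * schmidtBasis (s + i + 1) k := by
      have hlast : schmidtMulCoeff j s (j + 1) = 0 := by simp [schmidtMulCoeff]
      rw [sum_range_succ', sum_range_succ _ j, hlast]
      push_cast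
      simp only [mul_zero, zero_mul, add_zero]
      exact sum_congr rfl fun i _ => by simp only [← add_assoc]; ring
    apply mul_left_cancel₀ (show ((s : ℤ) + 1) ^ 2 ≠ 0 by positivity)
    calc ((s : ℤ) + 1) ^ 2 * (schmidtBasis j k * schmidtBasis (s + 1) k)
        = (x - s * (s + 1)) * (schmidtBasis j k * schmidtBasis s k) := by
          linear_combination -schmidtBasis j k * mul_schmidtBasis s k
      _ = ∑ i ∈ range (j + 1),
            schmidtMulCoeff j s i * ((x - s * (s + 1)) * schmidtBasis (s + i) k) := by
          rw [ih, mul_sum]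
          exact sum_congr rfl fun i _ => by ring
      _ = ∑ i ∈ range (j + 1), ((s + i + 1) ^ 2 * schmidtMulCoeff j s i * schmidtBasis (s + i + 1) k
            + i * (2 * s + i + 1) * schmidtMulCoeff j s i * schmidtBasis (s + i) k) := by
          refine sum_congr rfl fun i _ => ?_
          have := mul_schmidtBasis (s + i) k
          push_cast at this
          linear_combination schmidtMulCoeff j s i * this
      _ = ∑ i ∈ range (j + 1), ((s + 1) ^ 2 * schmidtMulCoeff j (s + 1) i)
            * schmidtBasis (s + 1 + i) k := by
          rw [sum_add_distrib, hshift, ← sum_add_distrib]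
          refine sum_congr rfl fun i _ => ?_
          rw [schmidtMulCoeff_succ, show s + 1 + i = s + i + 1 by omega]
          ring
      _ = _ := by
          rw [mul_sum]
          exact sum_congr rfl fun i _ => by ring

open Submodule in
def schmidtSpan : Submodule ℤ (ℕ → ℤ) := span ℤ (Set.range schmidtBasis)

theorem schmidtBasis_mem_schmidtSpan (s : ℕ) : schmidtBasis s ∈ schmidtSpan :=
  Submodule.subset_span ⟨s, rfl⟩

theorem mul_mem_schmidtSpan {f g : ℕ → ℤ} (hf : f ∈ schmidtSpan) (hg : g ∈ schmidtSpan) :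
    f * g ∈ schmidtSpan := by
  have hle : schmidtSpan * schmidtSpan ≤ schmidtSpan := by
    rw [schmidtSpan, Submodule.span_mul_span, Submodule.span_le]
    rintro _ ⟨_, ⟨j, rfl⟩, _, ⟨s, rfl⟩, rfl⟩
    have hexp : schmidtBasis j * schmidtBasis s
        = ∑ i ∈ range (j + 1), schmidtMulCoeff j s i • schmidtBasis (s + i) := by
      ext k
      simp [schmidtBasis_mul_schmidtBasis]
    change schmidtBasis j * schmidtBasis s ∈ _
    rw [hexp]
    exact Submodule.sum_mem _ fun i _ => Submodule.smul_mem _ _ (schmidtBasis_mem_schmidtSpan _)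
  exact hle (Submodule.mul_mem_mul hf hg)

theorem dvd_sum_of_mem_schmidtSpan (n : ℕ) {g : ℕ → ℤ} (hg : g ∈ schmidtSpan) :
    (n : ℤ) ∣ ∑ k ∈ range n, (2 * (k : ℤ) + 1) * g k := by
  induction hg using Submodule.span_induction with
  | mem _ h =>
    obtain ⟨s, rfl⟩ := h
    rw [sum_two_mul_add_one_mul_schmidtBasis, mul_assoc]
    exact dvd_mul_right _ _
  | zero => simp
  | add f g _ _ hf hg => simpa [mul_add, sum_add_distrib] using dvd_add hf hg
  | smul a f _ hf => simpa [mul_left_comm _ a, ← mul_sum] using hf.mul_left a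

open Submodule in
def schmidtChooseSpan (j : ℕ) : Submodule ℤ (ℕ → ℤ) :=
  span ℤ (Set.range fun t => (t.choose j : ℤ) • schmidtBasis t)

theorem schmidtChooseSpan_le_schmidtSpan (j : ℕ) : schmidtChooseSpan j ≤ schmidtSpan :=
  Submodule.span_le.mpr <| Set.range_subset_iff.mpr fun t =>
    Submodule.smul_mem _ _ (schmidtBasis_mem_schmidtSpan t)

theorem schmidtBasis_mem_schmidtChooseSpan (j : ℕ) : schmidtBasis j ∈ schmidtChooseSpan j :=
  Submodule.subset_span ⟨j, by simp⟩

theorem choose_mul_choose_mul_schmidtBasis (j t k : ℕ) :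
    ((k + j).choose (2 * j) : ℤ) * ((t.choose j : ℤ) * schmidtBasis t k)
      = (t + j).choose (2 * j) * ∑ i ∈ range (j + 1),
          j.choose i * ((t + i).choose j * schmidtBasis (t + i) k) := by
  have hcentral : ((2 * j).choose j : ℤ) ≠ 0 := by
    exact_mod_cast (Nat.choose_pos (by omega : j ≤ 2 * j)).ne'
  have hrev : (t.choose j : ℤ) * (j + t).choose t = (t + j).choose (2 * j) * (2 * j).choose j := by
    rw [add_comm j t, Nat.choose_symm_add]
    exact_mod_cast (mul_comm _ _).trans (Nat.choose_two_mul_mul_choose t j).symm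
  apply mul_left_cancel₀ hcentral
  calc ((2 * j).choose j : ℤ) * ((k + j).choose (2 * j) * (t.choose j * schmidtBasis t k))
      = t.choose j * (schmidtBasis j k * schmidtBasis t k) := by
        rw [show schmidtBasis j k = (2 * j).choose j * (k + j).choose (2 * j) from rfl]
        ring
    _ = _ := by
      rw [schmidtBasis_mul_schmidtBasis, mul_sum, mul_sum, mul_sum]
      refine sum_congr rfl fun i _ => ?_
      simp only [schmidtMulCoeff]
      linear_combination (j.choose i * (t + i).choose j * schmidtBasis (t + i) k : ℤ) * hrev

theorem choose_mul_mem_schmidtChooseSpan (j : ℕ) {f : ℕ → ℤ} (hf : f ∈ schmidtChooseSpan j) :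
    (fun k => ((k + j).choose (2 * j) : ℤ)) * f ∈ schmidtChooseSpan j := by
  induction hf using Submodule.span_induction with
  | mem _ h =>
    obtain ⟨t, rfl⟩ := h
    have hexp : (fun k => ((k + j).choose (2 * j) : ℤ)) * (t.choose j : ℤ) • schmidtBasis t
        = ((t + j).choose (2 * j) : ℤ) • ∑ i ∈ range (j + 1),
            (j.choose i : ℤ) • ((t + i).choose j : ℤ) • schmidtBasis (t + i) := by
      ext k
      simpa using choose_mul_choose_mul_schmidtBasis j t k
    rw [hexp]
    exact Submodule.smul_mem _ _ <| Submodule.sum_mem _ fun i _ =>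
      Submodule.smul_mem _ _ (Submodule.subset_span ⟨t + i, rfl⟩)
  | zero => simp
  | add f g _ _ hf hg => simpa [mul_add] using add_mem hf hg
  | smul a f _ hf => rw [mul_smul_comm]; exact Submodule.smul_mem _ a hf

theorem schmidtBasis_mul_pow_mem_schmidtSpan (j r : ℕ) :
    schmidtBasis j * (fun k => ((k + j).choose (2 * j) : ℤ)) ^ r ∈ schmidtSpan := by
  refine schmidtChooseSpan_le_schmidtSpan j ?_
  induction r with
  | zero => simpa using schmidtBasis_mem_schmidtChooseSpan j
  | succ r ih =>
    rw [pow_succ', mul_left_comm]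
    exact choose_mul_mem_schmidtChooseSpan j ih

section Sequences

variable (A : Type*) [CommRing A]

open Submodule in
def schmidtSeqSpan : Submodule ℤ (ℕ → A) :=
  span ℤ {f | ∃ g ∈ schmidtSpan, ∃ a : A, f = fun k => g k • a}

variable {A}

theorem smul_const_mem_schmidtSeqSpan {g : ℕ → ℤ} (hg : g ∈ schmidtSpan) (a : A) :
    (fun k => g k • a) ∈ schmidtSeqSpan A :=
  Submodule.subset_span ⟨g, hg, a, rfl⟩

theorem one_mem_schmidtSeqSpan : (1 : ℕ → A) ∈ schmidtSeqSpan A := by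
  convert smul_const_mem_schmidtSeqSpan (schmidtBasis_mem_schmidtSpan 0) (1 : A)
  simp

theorem mul_mem_schmidtSeqSpan {f g : ℕ → A} (hf : f ∈ schmidtSeqSpan A)
    (hg : g ∈ schmidtSeqSpan A) : f * g ∈ schmidtSeqSpan A := by
  have hle : schmidtSeqSpan A * schmidtSeqSpan A ≤ schmidtSeqSpan A := by
    rw [schmidtSeqSpan, Submodule.span_mul_span, Submodule.span_le]
    rintro _ ⟨_, ⟨g, hg, a, rfl⟩, _, ⟨g', hg', a', rfl⟩, rfl⟩
    have hprod : (fun k => g k • a) * (fun k => g' k • a') = fun k => (g * g') k • (a * a') := by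
      ext k
      exact smul_mul_smul_comm _ _ _ _
    change (fun k => g k • a) * (fun k => g' k • a') ∈ schmidtSeqSpan A
    rw [hprod]
    exact smul_const_mem_schmidtSeqSpan (mul_mem_schmidtSpan hg hg') (a * a')
  exact hle (Submodule.mul_mem_mul hf hg)

theorem pow_mem_schmidtSeqSpan {f : ℕ → A} (hf : f ∈ schmidtSeqSpan A) (m : ℕ) :
    f ^ m ∈ schmidtSeqSpan A := by
  induction m with
  | zero => simpa using one_mem_schmidtSeqSpan
  | succ m ih => simpa [pow_succ] using mul_mem_schmidtSeqSpan ih hf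

theorem dvd_sum_of_mem_schmidtSeqSpan (n : ℕ) {f : ℕ → A} (hf : f ∈ schmidtSeqSpan A) :
    (n : A) ∣ ∑ k ∈ range n, (2 * (k : ℤ) + 1) • f k := by
  induction hf using Submodule.span_induction with
  | mem _ h =>
    obtain ⟨g, hg, a, rfl⟩ := h
    simp only [smul_smul]
    rw [← sum_smul, zsmul_eq_mul, ← Int.cast_natCast]
    exact (Int.cast_dvd_cast _ _ (dvd_sum_of_mem_schmidtSpan n hg)).mul_right a
  | zero => simp
  | add f g _ _ hf hg => simpa [smul_add, sum_add_distrib] using dvd_add hf hg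
  | smul a f _ hf =>
    simp only [Pi.smul_apply, smul_comm _ a]
    rw [← smul_sum, zsmul_eq_mul]
    exact dvd_mul_of_dvd_right hf _

end Sequences

theorem schmidtMv_succ_eq_sum_range (r : ℕ) {k n : ℕ} (hk : k < n) :
    schmidtMv (r + 1) k = ∑ j ∈ range n,
      (schmidtBasis j k * ((k + j).choose (2 * j) : ℤ) ^ r) • MvPolynomial.X j := by
  rw [schmidtMv]
  refine sum_subset (range_subset_range.mpr hk) (fun j _ hj => ?_) |>.trans
    (sum_congr rfl fun j _ => ?_)
  · have hkj : k + j < 2 * j := by simp at hj; omega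
    simp [Nat.choose_eq_zero_of_lt hkj]
  · rw [MvPolynomial.smul_eq_C_mul, schmidtBasis]
    push_cast
    congr 2
    ring

theorem sum_schmidtMv_pow_dvd_general (r m n : ℕ) (hr : 0 < r) :
    ∀ d : ℕ →₀ ℕ,
      (n : ℤ) ∣ MvPolynomial.coeff d
        (∑ k ∈ Finset.range n, (2 * (k : ℤ) + 1) • (schmidtMv r k) ^ m) := by
  obtain ⟨r, rfl⟩ : ∃ r', r = r' + 1 := ⟨r - 1, by omega⟩
  let v : ℕ → MvPolynomial ℕ ℤ := fun k => ∑ j ∈ range n,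
    (schmidtBasis j k * ((k + j).choose (2 * j) : ℤ) ^ r) • MvPolynomial.X j
  have hv : v ∈ schmidtSeqSpan (MvPolynomial ℕ ℤ) := by
    rw [show v = ∑ j ∈ range n, fun k => _ from (sum_fn _ _).symm]
    exact Submodule.sum_mem _ fun j _ =>
      smul_const_mem_schmidtSeqSpan (schmidtBasis_mul_pow_mem_schmidtSpan j r) _
  have hsum : ∑ k ∈ range n, (2 * (k : ℤ) + 1) • schmidtMv (r + 1) k ^ m
      = ∑ k ∈ range n, (2 * (k : ℤ) + 1) • (v ^ m) k :=
    sum_congr rfl fun k hk => by rw [schmidtMv_succ_eq_sum_range r (mem_range.mp hk)]; rfl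
  have hdvd := dvd_sum_of_mem_schmidtSeqSpan n (pow_mem_schmidtSeqSpan hv m)
  rwa [← hsum, ← map_natCast MvPolynomial.C, MvPolynomial.C_dvd_iff_dvd_coeff] at hdvd

/-- For any positive integers `r`, `m`, `n`, every coefficient of
`∑_{k=0}^{n-1} (2k+1) · S_k^{(r)}(x_0,…,x_k)^m` is divisible by `n`. -/
theorem sum_schmidtMv_pow_dvd (r m n : ℕ) (hr : 0 < r) (hm : 0 < m) (hn : 0 < n) :
    ∀ d : ℕ →₀ ℕ,
      (n : ℤ) ∣ MvPolynomial.coeff d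
        (∑ k ∈ Finset.range n, (2 * (k : ℤ) + 1) • (schmidtMv r k) ^ m) :=
  sum_schmidtMv_pow_dvd_general r m n hr
end

section
/- For all nonnegative integers ℓ, m, k with ℓ ≥ m, one has the Pfaff–Saalschütz identity C(ℓ+m, m+k) · C(ℓ+k, k) = ∑_{i=0}^{k} C(ℓ−m, i) · C(m, m+i−k) · C(ℓ+m+i, ℓ). -/
/-!
Write `n = ℓ - m`. Vandermonde's identity along `ℓ + m + i = (ℓ + k) + (m + i - k)` expands
`C(ℓ+m+i, ℓ)` as `∑ⱼ C(ℓ+k, j) C(m+i-k, ℓ-j)`, and trinomial revision turns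
`C(m, m+i-k) C(m+i-k, ℓ-j)` into `C(m, ℓ-j) C(j-n, j-n-k+i)`. The sum over `i` is then
Vandermonde again and equals `C(j, k)`; a second trinomial revision
`C(ℓ+k, j) C(j, k) = C(ℓ+k, k) C(ℓ, j-k)` and a last Vandermonde over `j` leave
`C(ℓ+k, k) C(ℓ+m, ℓ-k)`.

All binomial coefficients are taken with integer indices (`zchoose`), vanishing outside
`0 ≤ b ≤ a`, so that Vandermonde and trinomial revision hold with no side conditions.
-/

open Finset

def zchoose (a b : ℤ) : ℕ := if 0 ≤ b ∧ b ≤ a then a.toNat.choose b.toNat else 0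

@[simp]
theorem zchoose_natCast (a b : ℕ) : zchoose a b = a.choose b := by
  unfold zchoose
  split_ifs with h
  · simp
  · rw [Nat.choose_eq_zero_of_lt (by omega)]

theorem zchoose_of_neg {a b : ℤ} (hb : b < 0) : zchoose a b = 0 :=
  if_neg (by omega)

theorem zchoose_of_lt {a b : ℤ} (h : a < b) : zchoose a b = 0 :=
  if_neg (by omega)

theorem zchoose_natCast_sub (a s t : ℕ) :
    zchoose a ((s : ℤ) - t) = if t ≤ s then a.choose (s - t) else 0 := by
  split_ifs with h
  · rw [← Nat.cast_sub h, zchoose_natCast]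
  · exact zchoose_of_neg (by omega)

theorem zchoose_symm {a : ℤ} (ha : 0 ≤ a) (b : ℤ) : zchoose a (a - b) = zchoose a b := by
  lift a to ℕ using ha
  rcases lt_or_ge b 0 with hb | hb
  · rw [zchoose_of_lt (by omega), zchoose_of_neg hb]
  lift b to ℕ using hb
  rw [zchoose_natCast_sub, zchoose_natCast]
  split_ifs with h
  · exact Nat.choose_symm h
  · exact (Nat.choose_eq_zero_of_lt (by omega)).symm

theorem zchoose_mul (a b c : ℤ) :
    zchoose a b * zchoose b c = zchoose a c * zchoose (a - c) (b - c) := by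
  by_cases h : 0 ≤ c ∧ c ≤ b ∧ b ≤ a
  · obtain ⟨hc, hcb, hba⟩ := h
    lift c to ℕ using hc
    lift b to ℕ using by omega
    lift a to ℕ using by omega
    rw [← Nat.cast_sub (by omega), ← Nat.cast_sub (by omega)]
    simp only [zchoose_natCast]
    exact Nat.choose_mul (by omega)
  · unfold zchoose
    split_ifs <;> omega

theorem Finset.sum_range_eq_sum_range_of_eq_zero {M : Type*} [AddCommMonoid M] {f : ℕ → M}
    {N₁ N₂ : ℕ} (h₁ : ∀ x, N₁ ≤ x → f x = 0) (h₂ : ∀ x, N₂ ≤ x → f x = 0) :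
    ∑ x ∈ range N₁, f x = ∑ x ∈ range N₂, f x := by
  rcases le_total N₁ N₂ with h | h
  · exact sum_subset (range_subset_range.2 h) fun x _ hx => h₁ x (by simpa using hx)
  · exact (sum_subset (range_subset_range.2 h) fun x _ hx => h₂ x (by simpa using hx)).symm

theorem sum_range_choose_mul_zchoose_natCast_sub (a b t : ℕ) :
    ∑ x ∈ range (t + 1), a.choose x * zchoose b ((t : ℤ) - x) = (a + b).choose t := by
  rw [Nat.add_choose_eq, Nat.sum_antidiagonal_eq_sum_range_succ_mk]
  refine sum_congr rfl fun x hx => ?_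
  rw [zchoose_natCast_sub, if_pos (Nat.lt_succ_iff.1 (mem_range.1 hx))]

theorem sum_range_choose_mul_zchoose (a b : ℕ) (z : ℤ) :
    ∑ x ∈ range (a + 1), a.choose x * zchoose b (z - x) = zchoose (a + b : ℕ) z := by
  rcases lt_or_ge z 0 with hz | hz
  · rw [zchoose_of_neg hz]
    exact sum_eq_zero fun x _ => by rw [zchoose_of_neg (by omega), mul_zero]
  lift z to ℕ using hz
  rw [zchoose_natCast, ← sum_range_choose_mul_zchoose_natCast_sub]
  refine sum_range_eq_sum_range_of_eq_zero (fun x hx => ?_) (fun x hx => ?_)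
  · rw [Nat.choose_eq_zero_of_lt (by omega), zero_mul]
  · rw [zchoose_of_neg (by omega), mul_zero]

theorem zchoose_mul_zchoose_add (p c : ℤ) (a : ℕ) (z : ℤ) :
    zchoose p c * zchoose (a + c) z =
      ∑ j ∈ range (a + 1),
        a.choose j * (zchoose p (z - j) * zchoose (p - (z - j)) (c - (z - j))) := by
  simp_rw [← zchoose_mul, mul_left_comm _ (zchoose p c), ← mul_sum]
  rcases lt_or_ge c 0 with hc | hc
  · rw [zchoose_of_neg hc, zero_mul, zero_mul]
  lift c to ℕ using hc
  rw [sum_range_choose_mul_zchoose, Nat.cast_add]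

theorem sum_range_choose_mul_zchoose_sub_add (n b k : ℕ) :
    ∑ i ∈ range (k + 1), n.choose i * zchoose b (b - k + i) = (n + b).choose k := by
  rw [← sum_range_choose_mul_zchoose_natCast_sub]
  refine sum_congr rfl fun i _ => ?_
  rw [← zchoose_symm (Nat.cast_nonneg b) (k - i)]
  congr 2
  ring

theorem sum_range_choose_mul_zchoose_mul_choose (ℓ m k : ℕ) :
    ∑ j ∈ range (ℓ + k + 1), (ℓ + k).choose j * (zchoose m (ℓ - j) * j.choose k) =
      (ℓ + k).choose k * (ℓ + m).choose (m + k) := by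
  have trinomial (j : ℕ) :
      (ℓ + k).choose j * j.choose k = (ℓ + k).choose k * zchoose ℓ (j - k) := by
    have := zchoose_mul (ℓ + k : ℕ) j k
    rwa [zchoose_natCast, zchoose_natCast, zchoose_natCast, Nat.cast_add,
      add_sub_cancel_right] at this
  calc ∑ j ∈ range (ℓ + k + 1), (ℓ + k).choose j * (zchoose m (ℓ - j) * j.choose k)
      = (ℓ + k).choose k *
          ∑ j ∈ range (k + (ℓ + 1)), zchoose ℓ (j - k) * zchoose m (ℓ - j) := by
        rw [mul_sum, add_comm ℓ k, add_assoc]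
        refine sum_congr rfl fun j _ => ?_
        rw [mul_left_comm, add_comm k ℓ, trinomial]
        ring
    _ = (ℓ + k).choose k *
          ∑ x ∈ range (ℓ + 1), ℓ.choose x * zchoose m ((ℓ - k : ℤ) - x) := by
        rw [sum_range_add, sum_eq_zero fun j hj => by
          rw [zchoose_of_neg (by simp at hj; omega), zero_mul], zero_add]
        refine congrArg _ (sum_congr rfl fun x _ => ?_)
        push_cast
        rw [add_sub_cancel_left, zchoose_natCast, sub_add_eq_sub_sub]
    _ = (ℓ + k).choose k * (ℓ + m).choose (m + k) := by
        rw [sum_range_choose_mul_zchoose, ← zchoose_symm (Nat.cast_nonneg _),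
          ← zchoose_natCast (ℓ + m)]
        congr 2
        push_cast
        ring

theorem zchoose_mul_choose_eq_sum (m n k i : ℕ) :
    zchoose m (m + i - k) * (m + n + m + i).choose (m + n) =
      ∑ j ∈ range (m + n + k + 1),
        (m + n + k).choose j * (zchoose m (m + n - j) * zchoose (j - n) (j - n - k + i)) := by
  have h : (m + n + m + i).choose (m + n) = zchoose ((m + n + k : ℕ) + (m + i - k)) (m + n) := by
    rw [← zchoose_natCast]
    congr 1
    push_cast
    ring
  rw [h, zchoose_mul_zchoose_add]
  refine sum_congr rfl fun j _ => ?_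
  rw [show (m : ℤ) - (m + n - j) = j - n by ring,
    show (m + i - k : ℤ) - (m + n - j) = j - n - k + i by ring]

theorem zchoose_mul_sum_range_choose_mul_zchoose (m n k j : ℕ) :
    zchoose m (m + n - j) * ∑ i ∈ range (k + 1), n.choose i * zchoose (j - n) (j - n - k + i) =
      zchoose m (m + n - j) * j.choose k := by
  rcases lt_or_ge j n with hj | hj
  · rw [zchoose_of_lt (by omega), zero_mul, zero_mul]
  obtain ⟨b, rfl⟩ := Nat.exists_eq_add_of_le hj
  push_cast
  rw [add_sub_cancel_left, sum_range_choose_mul_zchoose_sub_add]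

/-- The Pfaff–Saalschütz identity: for nonnegative integers `ℓ, m, k` with `m ≤ ℓ`,
`C(ℓ+m, m+k) · C(ℓ+k, k) = ∑_{i=0}^{k} C(ℓ−m, i) · C(m, m+i−k) · C(ℓ+m+i, ℓ)`,
where a binomial coefficient with negative lower index is interpreted as `0`. -/
theorem pfaff_saalschutz (ℓ m k : ℕ) (h : m ≤ ℓ) :
    (ℓ + m).choose (m + k) * (ℓ + k).choose k =
      ∑ i ∈ Finset.range (k + 1),
        (ℓ - m).choose i * (if k ≤ m + i then m.choose (m + i - k) else 0) *
          (ℓ + m + i).choose ℓ := by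
  obtain ⟨n, rfl⟩ := Nat.exists_eq_add_of_le h
  have hguard (i : ℕ) :
      (if k ≤ m + i then m.choose (m + i - k) else 0) = zchoose m (m + i - k) := by
    rw [← Nat.cast_add, zchoose_natCast_sub]
  calc (m + n + m).choose (m + k) * (m + n + k).choose k
      = ∑ j ∈ range (m + n + k + 1),
          (m + n + k).choose j * (zchoose m ((m + n : ℕ) - j) * j.choose k) := by
        rw [sum_range_choose_mul_zchoose_mul_choose, mul_comm]
    _ = ∑ j ∈ range (m + n + k + 1), (m + n + k).choose j * (zchoose m (m + n - j) *
          ∑ i ∈ range (k + 1), n.choose i * zchoose (j - n) (j - n - k + i)) := by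
        simp_rw [zchoose_mul_sum_range_choose_mul_zchoose, Nat.cast_add]
    _ = _ := by
        simp_rw [Nat.add_sub_cancel_left, hguard, mul_assoc, zchoose_mul_choose_eq_sum, mul_sum]
        rw [sum_comm]
        refine sum_congr rfl fun j _ => sum_congr rfl fun i _ => ?_
        ring
end

section
/- For all nonnegative integers ℓ, m, k with ℓ ≥ m, one has C(ℓ+k, 2k) · C(2k, k) · C(ℓ+m, 2m) · C(2m, m) = ∑_{i=0}^{k} ((m+k)! · i!)/((m+i)! · k!) · C(m, k−i) · C(ℓ−m, i) · C(ℓ+m+i, i) · C(ℓ+m, 2m) · C(2m, m); equivalently, C(ℓ+k, 2k) · C(2k, k) = ∑_{i=0}^{k} ((m+k)! · i!)/((m+i)! · k!) · C(m, k−i) · C(ℓ−m, i) · C(ℓ+m+i, i). -/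
/-!
With `a = -(ℓ - m)`, `b = ℓ + m + 1`, `c = m + 1` the sum is the terminating balanced
hypergeometric series `₃F₂(-k, a, b; c, 1 + a + b - c - k; 1)`, so the identity is an instance of
the Pfaff–Saalschütz summation. Cleared of denominators, that summation is the polynomial identity
`∑ C(n,k) (a)ₖ (b)ₖ (c+k)ₙ₋ₖ (c-a-b)ₙ₋ₖ = (c-a)ₙ (c-b)ₙ` in rising factorials, valid in every
commutative ring; it follows by induction on `n` from Zeilberger's recurrence, whose certificate
is again a polynomial. Evaluating the rising factorials at integers turns them into factorials
and binomial coefficients.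
-/

open Finset Polynomial Nat

theorem ascPochhammer_succ_eval_left {S : Type*} [CommSemiring S] (x : S) (n : ℕ) :
    (ascPochhammer S (n + 1)).eval x = x * (ascPochhammer S n).eval (x + 1) := by
  simp [ascPochhammer_succ_left, eval_comp]

theorem ascPochhammer_eval_neg_natCast (R : Type*) [Ring R] (x k : ℕ) :
    (ascPochhammer R k).eval (-(x : R)) = (-1) ^ k * k ! * x.choose k := by
  rw [ascPochhammer_eval_neg_eq_descPochhammer, descPochhammer_eval_eq_descFactorial,
    Nat.descFactorial_eq_factorial_mul_choose, Nat.cast_mul, mul_assoc]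

theorem ascPochhammer_eval_natCast_add_one (R : Type*) [Semiring R] (x k : ℕ) :
    (ascPochhammer R k).eval ((x : R) + 1) = k ! * (x + k).choose k := by
  rw [← Nat.cast_succ, ascPochhammer_nat_eq_natCast_ascFactorial,
    Nat.ascFactorial_eq_factorial_mul_choose, Nat.cast_mul]

theorem Nat.add_choose_two_mul_mul_choose (l k : ℕ) :
    (l + k).choose (2 * k) * (2 * k).choose k = (l + k).choose k * l.choose k := by
  rcases le_or_gt k l with hk | hk
  · have := Nat.choose_mul (n := l + k) (k := 2 * k) (s := k) (by omega)
    rwa [show l + k - k = l by omega, show 2 * k - k = k by omega] at this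
  · simp [Nat.choose_eq_zero_of_lt hk, Nat.choose_eq_zero_of_lt (by omega : l + k < 2 * k)]

section PfaffSaalschutz

variable {R : Type*} [CommRing R] (a b c : R)

/-- `(c)ₙ (c-a-b)ₙ` times the `k`-th term of `₃F₂(-n, a, b; c, 1 + a + b - c - n; 1)`. -/
noncomputable def saalschutzTerm (n k : ℕ) : R :=
  n.choose k * (ascPochhammer R k).eval a * (ascPochhammer R k).eval b *
    (ascPochhammer R (n - k)).eval (c + k) * (ascPochhammer R (n - k)).eval (c - a - b)

noncomputable def saalschutzCertificate (n : ℕ) : ℕ → R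
  | 0 => 0
  | k + 1 => -(n.choose k * (ascPochhammer R (k + 1)).eval a * (ascPochhammer R (k + 1)).eval b *
      (ascPochhammer R (n - k)).eval (c + k) * (ascPochhammer R (n - k)).eval (c - a - b))

theorem saalschutzTerm_succ_sub {n k : ℕ} (hk : k ≤ n + 1) :
    saalschutzTerm a b c (n + 1) k - (c - a + n) * (c - b + n) * saalschutzTerm a b c n k =
      saalschutzCertificate a b c n (k + 1) - saalschutzCertificate a b c n k := by
  rcases hk.eq_or_lt with rfl | hk
  · simp [saalschutzTerm, saalschutzCertificate]
  obtain ⟨j, rfl⟩ := Nat.exists_eq_add_of_le (Nat.lt_succ_iff.mp hk)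
  cases k with
  | zero =>
    simp only [saalschutzTerm, saalschutzCertificate, Nat.sub_zero, ascPochhammer_succ_eval,
      Nat.choose_zero_right, ascPochhammer_zero, eval_one]
    push_cast
    ring
  | succ k =>
    have hpascal := Nat.choose_succ_right_eq (k + 1 + j) k
    rw [show k + 1 + j - k = j + 1 by omega] at hpascal
    have hpascal' := congrArg (Nat.cast : ℕ → R) hpascal
    simp only [saalschutzTerm, saalschutzCertificate, show k + 1 + j + 1 - (k + 1) = j + 1 by omega,
      show k + 1 + j - (k + 1) = j by omega, show k + 1 + j - k = j + 1 by omega,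
      Nat.choose_succ_succ']
    push_cast at hpascal' ⊢
    rw [ascPochhammer_succ_eval (k + 1) a, ascPochhammer_succ_eval (k + 1) b,
      ascPochhammer_succ_eval_left (c + k), ascPochhammer_succ_eval j (c + (k + 1)),
      ascPochhammer_succ_eval j (c - a - b), ← add_assoc c]
    push_cast
    linear_combination (-(c - a - b + j) * (ascPochhammer R (k + 1)).eval a *
      (ascPochhammer R (k + 1)).eval b * (ascPochhammer R j).eval (c + k + 1) *
      (ascPochhammer R j).eval (c - a - b)) * hpascal'

theorem sum_saalschutzTerm (n : ℕ) :
    ∑ k ∈ range (n + 1), saalschutzTerm a b c n k =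
      (ascPochhammer R n).eval (c - a) * (ascPochhammer R n).eval (c - b) := by
  induction n with
  | zero => simp [saalschutzTerm]
  | succ n ih =>
    have htelescope : ∑ k ∈ range (n + 1 + 1), (saalschutzTerm a b c (n + 1) k -
        (c - a + n) * (c - b + n) * saalschutzTerm a b c n k) = 0 := by
      rw [sum_congr rfl fun k hk =>
          saalschutzTerm_succ_sub a b c (Nat.lt_succ_iff.mp (mem_range.mp hk)), sum_range_sub]
      simp [saalschutzCertificate]
    have hlast : saalschutzTerm a b c n (n + 1) = 0 := by simp [saalschutzTerm]
    rw [sum_sub_distrib, ← mul_sum, sum_range_succ (saalschutzTerm a b c n), hlast, add_zero, ih,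
      sub_eq_zero] at htelescope
    rw [htelescope, ascPochhammer_succ_eval, ascPochhammer_succ_eval]
    ring

end PfaffSaalschutz

theorem saalschutzTerm_neg_natCast {l m : ℕ} (h : m ≤ l) {k i : ℕ} (hi : i ≤ k) :
    saalschutzTerm (-((l - m : ℕ) : ℚ)) ((l + m : ℕ) + 1) ((m : ℚ) + 1) k i =
      (-1) ^ k * (k ! : ℚ) ^ 2 * ((((m + k)! : ℚ) * (i ! : ℚ)) / (((m + i)! : ℚ) * (k ! : ℚ)) *
        (m.choose (k - i) : ℚ) * ((l - m).choose i : ℚ) * ((l + m + i).choose i : ℚ)) := by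
  have hc : ((m : ℚ) + 1) - -((l - m : ℕ) : ℚ) - (((l + m : ℕ) : ℚ) + 1) = -(m : ℚ) := by
    push_cast [h]; ring
  have hshift : ((m : ℚ) + 1) + (i : ℚ) = ((m + i : ℕ) : ℚ) + 1 := by push_cast; ring
  have hfac : ((k.choose i : ℕ) : ℚ) * i ! * (k - i)! = k ! := by
    exact_mod_cast Nat.choose_mul_factorial_mul_factorial hi
  have hfac' : (((m + k).choose (k - i) : ℕ) : ℚ) * (k - i)! * (m + i)! = (m + k)! := by
    have := Nat.choose_mul_factorial_mul_factorial (n := m + k) (k := k - i) (by omega)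
    rw [show m + k - (k - i) = m + i by omega] at this
    exact_mod_cast this
  have hsign : (-1 : ℚ) ^ i * (-1) ^ (k - i) = (-1) ^ k := by
    rw [← pow_add, Nat.add_sub_cancel' hi]
  simp only [saalschutzTerm, hc, hshift, ascPochhammer_eval_neg_natCast,
    ascPochhammer_eval_natCast_add_one, show m + i + (k - i) = m + k by omega]
  rw [← hfac, ← hfac', ← hsign]
  field_simp

open Nat in
/-- For nonnegative integers `ℓ, m, k` with `m ≤ ℓ`:
`C(ℓ+k,2k)·C(2k,k)·C(ℓ+m,2m)·C(2m,m)
  = ∑_{i=0}^{k} ((m+k)!·i!)/((m+i)!·k!) · C(m,k−i) · C(ℓ−m,i) · C(ℓ+m+i,i) · C(ℓ+m,2m) · C(2m,m)`;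
equivalently,
`C(ℓ+k,2k)·C(2k,k) = ∑_{i=0}^{k} ((m+k)!·i!)/((m+i)!·k!) · C(m,k−i) · C(ℓ−m,i) · C(ℓ+m+i,i)`.
The factorial quotient is expressed over `ℚ`. -/
theorem pfaff_saalschutz_rewritten (ℓ m k : ℕ) (h : m ≤ ℓ) :
    (((ℓ + k).choose (2 * k) : ℚ) * ((2 * k).choose k : ℚ) *
        ((ℓ + m).choose (2 * m) : ℚ) * ((2 * m).choose m : ℚ) =
      ∑ i ∈ Finset.range (k + 1),
        (((m + k)! : ℚ) * (i ! : ℚ)) / (((m + i)! : ℚ) * (k ! : ℚ)) *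
          (m.choose (k - i) : ℚ) * ((ℓ - m).choose i : ℚ) * ((ℓ + m + i).choose i : ℚ) *
          ((ℓ + m).choose (2 * m) : ℚ) * ((2 * m).choose m : ℚ)) ∧
    (((ℓ + k).choose (2 * k) : ℚ) * ((2 * k).choose k : ℚ) =
      ∑ i ∈ Finset.range (k + 1),
        (((m + k)! : ℚ) * (i ! : ℚ)) / (((m + i)! : ℚ) * (k ! : ℚ)) *
          (m.choose (k - i) : ℚ) * ((ℓ - m).choose i : ℚ) * ((ℓ + m + i).choose i : ℚ)) := by
  refine (fun key => ⟨by rw [key, sum_mul, sum_mul], key⟩) ?_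
  have hPS := sum_saalschutzTerm (-((ℓ - m : ℕ) : ℚ)) ((ℓ + m : ℕ) + 1) ((m : ℚ) + 1) k
  rw [sum_congr rfl fun i hi => saalschutzTerm_neg_natCast h (Nat.lt_succ_iff.mp (mem_range.mp hi)),
    ← mul_sum, show (m : ℚ) + 1 - -((ℓ - m : ℕ) : ℚ) = (ℓ : ℚ) + 1 by push_cast [h]; ring,
    show (m : ℚ) + 1 - (((ℓ + m : ℕ) : ℚ) + 1) = -(ℓ : ℚ) by push_cast; ring,
    ascPochhammer_eval_natCast_add_one, ascPochhammer_eval_neg_natCast] at hPS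
  have hbin := congrArg (Nat.cast : ℕ → ℚ) (Nat.add_choose_two_mul_mul_choose ℓ k)
  push_cast at hbin
  have hne : (-1 : ℚ) ^ k * (k ! : ℚ) ^ 2 ≠ 0 := by simp [Nat.factorial_ne_zero]
  apply mul_left_cancel₀ hne
  linear_combination (-1 : ℚ) ^ k * (k ! : ℚ) ^ 2 * hbin - hPS
end

section
/- For all nonnegative integers n and k with k ≤ n−1 (n ≥ 1), one has ∑_{ℓ=k}^{n−1} (2ℓ+1) · C(ℓ+k, 2k) · C(2k, k) = n · C(n, k+1) · C(n+k, k). -/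
/-!
The summand vanishes for `ℓ < k`, so the sum may be taken over all `ℓ < n`, and the identity
follows by induction on `n`: writing `C(n+k, 2k) C(2k, k) = C(n+k, k) C(n, k)`, the increment
`F(n+1) - F(n)` of the right-hand side `F(n) = n C(n, k+1) C(n+k, k)` reduces, through the ratios
`C(n, k+1) / C(n, k)` and `C(n+k+1, k) / C(n+k, k)`, to the polynomial identity
`n (n-k) + (2n+1)(k+1) = (n+1)(n+k+1)`.
-/

open Finset

namespace Nat

theorem add_choose_two_mul_mul_choose_s7 (n k : ℕ) :
    (n + k).choose (2 * k) * (2 * k).choose k = (n + k).choose k * n.choose k := by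
  simpa [two_mul] using choose_mul (n := n + k) (k := 2 * k) (s := k) (by omega)

theorem add_one_mul_choose_add_one_mul_choose_eq_add {n k : ℕ} (h : k ≤ n) :
    n * n.choose (k + 1) * (n + k).choose k
        + (2 * n + 1) * (n + k).choose (2 * k) * (2 * k).choose k =
      (n + 1) * (n + 1).choose (k + 1) * (n + 1 + k).choose k := by
  have hsucc_right := choose_succ_right_eq n k
  have hsucc_top : (n + k).choose k * (n + k + 1) = (n + k + 1).choose k * (n + 1) := by
    simpa [show n + k + 1 - k = n + 1 by omega] using choose_mul_succ_eq (n + k) k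
  rw [mul_assoc _ ((n + k).choose (2 * k)), add_choose_two_mul_mul_choose_s7,
    choose_succ_succ', show n + 1 + k = n + k + 1 by ring]
  zify [h] at hsucc_right hsucc_top ⊢
  linear_combination
    ((n.choose k : ℤ) + n.choose (k + 1)) * hsucc_top - ((n + k).choose k : ℤ) * hsucc_right

theorem sum_range_two_mul_add_one_mul_choose (n k : ℕ) :
    ∑ ℓ ∈ range n, (2 * ℓ + 1) * (ℓ + k).choose (2 * k) * (2 * k).choose k =
      n * n.choose (k + 1) * (n + k).choose k := by
  induction n with
  | zero => simp
  | succ n ih =>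
    rw [sum_range_succ, ih]
    rcases le_or_gt k n with h | h
    · exact add_one_mul_choose_add_one_mul_choose_eq_add h
    · simp [choose_eq_zero_of_lt, h, show n < k + 1 by omega, show n + k < 2 * k by omega]

end Nat

theorem sum_two_ell_add_one_choose_general (n k : ℕ) (hn : 1 ≤ n) :
    ∑ ℓ ∈ Finset.Icc k (n - 1), (2 * ℓ + 1) * (ℓ + k).choose (2 * k) * (2 * k).choose k =
      n * n.choose (k + 1) * (n + k).choose k := by
  rw [← Nat.sum_range_two_mul_add_one_mul_choose,
    Icc_sub_one_right_eq_Ico_of_not_isMin (by simpa using Nat.one_le_iff_ne_zero.mp hn)]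
  refine sum_subset (fun ℓ hℓ ↦ by simp only [mem_Ico, mem_range] at hℓ ⊢; omega) fun ℓ hℓn hℓ ↦ ?_
  simp only [mem_range, mem_Ico] at hℓn hℓ
  rw [Nat.choose_eq_zero_of_lt (by omega), mul_zero, zero_mul]

/-- For `n ≥ 1` and `k ≤ n−1`:
`∑_{ℓ=k}^{n−1} (2ℓ+1)·C(ℓ+k,2k)·C(2k,k) = n·C(n,k+1)·C(n+k,k)`. -/
theorem sum_two_ell_add_one_choose (n k : ℕ) (hn : 1 ≤ n) (hk : k ≤ n - 1) :
    ∑ ℓ ∈ Finset.Icc k (n - 1), (2 * ℓ + 1) * (ℓ + k).choose (2 * k) * (2 * k).choose k =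
      n * n.choose (k + 1) * (n + k).choose k :=
  sum_two_ell_add_one_choose_general n k hn
end

section
/- For all nonnegative integers n and k with k ≤ n−1 (n ≥ 1), one has ∑_{ℓ=k}^{n−1} (−1)^ℓ · (2ℓ+1) · C(ℓ+k, 2k) · C(2k, k) = (−1)^{n−1} · n · C(n−1, k) · C(n+k, k). -/
/-!
Since `C(ℓ+k, 2k) = 0` for `ℓ < k`, the sum may start at `ℓ = 0`, and the factor `C(2k, k)` comes
out. The remaining alternating sum telescopes: with `N = n + k`, the identity
`(N + 1) C(N, 2k) = (N + 1 - 2k) C(N + 1, 2k)` is exactly the induction step for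
`∑_{ℓ<n} (-1)^ℓ (2ℓ+1) C(ℓ+k, 2k) = (-1)^(n+1) (n-k) C(n+k, 2k)`. Finally
`C(n+k, 2k) C(2k, k) = C(n+k, k) C(n, k)` and `(n - k) C(n, k) = n C(n-1, k)`.
-/

open Finset

theorem Nat.cast_choose_mul_succ_eq {R : Type*} [Ring R] (n k : ℕ) :
    (n.choose k : R) * (n + 1) = ((n + 1).choose k : R) * (n + 1 - k) := by
  rcases le_or_gt k (n + 1) with hk | hk
  · have h := congrArg (Nat.cast (R := R)) (Nat.choose_mul_succ_eq n k)
    push_cast [hk] at h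
    exact h
  · rw [Nat.choose_eq_zero_of_lt hk, Nat.choose_eq_zero_of_lt (by omega)]
    simp

theorem sum_range_neg_one_pow_mul_two_mul_add_one_mul_choose {R : Type*} [CommRing R]
    (n k : ℕ) :
    ∑ ℓ ∈ range n, (-1 : R) ^ ℓ * (2 * ℓ + 1) * ((ℓ + k).choose (2 * k) : R) =
      (-1 : R) ^ (n + 1) * (n - k) * ((n + k).choose (2 * k) : R) := by
  induction n with
  | zero =>
    rcases k.eq_zero_or_pos with rfl | hk
    · simp
    · simp [Nat.choose_eq_zero_of_lt (show k < 2 * k by omega)]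
  | succ n ih =>
    have step := Nat.cast_choose_mul_succ_eq (R := R) (n + k) (2 * k)
    rw [sum_range_succ, ih, show n + 1 + k = n + k + 1 by omega]
    push_cast at step ⊢
    linear_combination (-1 : R) ^ n * step

theorem sum_alt_two_ell_add_one_choose_general (n k : ℕ) (hn : 1 ≤ n) :
    ∑ ℓ ∈ Finset.Icc k (n - 1),
        (-1 : ℤ) ^ ℓ * (2 * (ℓ : ℤ) + 1) * ((ℓ + k).choose (2 * k) : ℤ) * ((2 * k).choose k : ℤ) =
      (-1 : ℤ) ^ (n - 1) * (n : ℤ) * ((n - 1).choose k : ℤ) * ((n + k).choose k : ℤ) := by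
  obtain ⟨m, rfl⟩ : ∃ m, n = m + 1 := ⟨n - 1, by omega⟩
  have start_at_zero :
      ∑ ℓ ∈ Icc k m, (-1 : ℤ) ^ ℓ * (2 * (ℓ : ℤ) + 1) * ((ℓ + k).choose (2 * k) : ℤ) =
        ∑ ℓ ∈ range (m + 1), (-1 : ℤ) ^ ℓ * (2 * (ℓ : ℤ) + 1) * ((ℓ + k).choose (2 * k) : ℤ) := by
    refine sum_subset (fun ℓ hℓ ↦ by simp at hℓ ⊢; omega) fun ℓ hℓ hℓ' ↦ ?_
    simp only [mem_range, mem_Icc] at hℓ hℓ'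
    simp [Nat.choose_eq_zero_of_lt (show ℓ + k < 2 * k by omega)]
  have choose_mul : ((m + 1 + k).choose (2 * k) * (2 * k).choose k : ℤ) =
      (m + 1 + k).choose k * (m + 1).choose k := by
    have h := Nat.choose_mul (n := m + 1 + k) (k := 2 * k) (s := k) (by omega)
    rw [show m + 1 + k - k = m + 1 by omega, show 2 * k - k = k by omega] at h
    exact_mod_cast h
  have succ_eq := Nat.cast_choose_mul_succ_eq (R := ℤ) m k
  rw [Nat.add_sub_cancel, ← sum_mul, start_at_zero,
    sum_range_neg_one_pow_mul_two_mul_add_one_mul_choose]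
  push_cast
  linear_combination (-1 : ℤ) ^ m * (m + 1 - k) * choose_mul -
    (-1 : ℤ) ^ m * ((m + 1 + k).choose k : ℤ) * succ_eq

/-- For `n ≥ 1` and `k ≤ n−1`:
`∑_{ℓ=k}^{n−1} (−1)^ℓ·(2ℓ+1)·C(ℓ+k,2k)·C(2k,k) = (−1)^{n−1}·n·C(n−1,k)·C(n+k,k)`. -/
theorem sum_alt_two_ell_add_one_choose (n k : ℕ) (hn : 1 ≤ n) (hk : k ≤ n - 1) :
    ∑ ℓ ∈ Finset.Icc k (n - 1),
        (-1 : ℤ) ^ ℓ * (2 * (ℓ : ℤ) + 1) * ((ℓ + k).choose (2 * k) : ℤ) * ((2 * k).choose k : ℤ) =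
      (-1 : ℤ) ^ (n - 1) * (n : ℤ) * ((n - 1).choose k : ℤ) * ((n + k).choose k : ℤ) :=
  sum_alt_two_ell_add_one_choose_general n k hn
end

section
/- For all nonnegative integers ℓ, i, j with i ≤ j, one has C(ℓ+i, 2i) · C(2i, i) · C(ℓ+j, 2j) · C(2j, j) = ∑_{k=0}^{i} C(i+j, i) · C(j, i−k) · C(j+k, k) · C(ℓ+j+k, 2j+2k) · C(2j+2k, j+k). -/
/-!
Put `D a = C(ℓ+a, 2a) · C(2a, a) = C(ℓ, a) · C(ℓ+a, a)` and `x = ℓ(ℓ+1)`. Then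
`(a+1)² D (a+1) = (x - a(a+1)) D a`, so `D a · a!²` is the Newton polynomial
`∏_{m<a} (x - m(m+1))`, and the identity expands a product of two Newton polynomials in the
Newton basis. It holds for every sequence `f` with `f 0 = 1` satisfying this recurrence, by
induction on `i`: after rewriting `C(j, i-k) · C(j+k, k) = C(j+k, i) · C(i, k)`, the right-hand
side satisfies the same recurrence in `i` as `f i · f j`, which comes down to a three-term
relation between binomial coefficients.
-/

open Finset

theorem Nat.cast_choose_succ_mul {R : Type*} [CommRing R] (n k : ℕ) :
    (n.choose (k + 1) : R) * (k + 1) = n.choose k * ((n : R) - k) := by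
  rcases le_or_gt k n with hkn | hnk
  · simpa [Nat.cast_sub hkn] using congrArg (Nat.cast : ℕ → R) (Nat.choose_succ_right_eq n k)
  · simp [Nat.choose_eq_zero_of_lt hnk, Nat.choose_eq_zero_of_lt (hnk.trans k.lt_succ_self)]

namespace NewtonProduct

variable {R : Type*} [CommRing R] {x : R} {f : ℕ → R}

theorem coeff_succ_succ (n j k : ℕ) :
    ((n : R) + 1) * (n + j + 1) * ((n + 1).choose (k + 1) * (j + k + 1).choose (n + 1)) =
      n.choose k * (j + k).choose n * ((j : R) + k + 1) ^ 2 +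
        n.choose (k + 1) * (j + k + 1).choose n * (((j : R) + k + 1 - n) * (j + k + n + 2)) := by
  have hr := Nat.cast_choose_succ_mul (R := R) (j + k + 1) n
  have hq := congrArg (Nat.cast : ℕ → R) (Nat.add_one_mul_choose_eq (j + k) n)
  have hb := Nat.cast_choose_succ_mul (R := R) n k
  rw [Nat.choose_succ_succ']
  push_cast at hr hq ⊢
  linear_combination
    (((n : R) + j + 1) * ((n.choose k : R) + n.choose (k + 1)) - n.choose k * (j + k + 1)) * hr -
      (n.choose k : R) * (j + k + 1) * hq -
      ((j + k + 1).choose n : R) * (j + k + 1 - n) * hb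

theorem succ_mul_sum_eq (hf : ∀ a : ℕ, ((a : R) + 1) ^ 2 * f (a + 1) = (x - a * (a + 1)) * f a)
    (n j : ℕ) :
    ((n : R) + 1) * (n + j + 1) *
        ∑ k ∈ range (n + 2), ((n + 1).choose k * (j + k).choose (n + 1) : R) * f (j + k) =
      (x - n * (n + 1)) * ∑ k ∈ range (n + 1), (n.choose k * (j + k).choose n : R) * f (j + k) := by
  set A : ℕ → R := fun k ↦ n.choose k * (j + k).choose n * ((j : R) + k + 1) ^ 2 * f (j + k + 1)
  set B : ℕ → R := fun k ↦
    n.choose k * (j + k).choose n * (((j : R) + k - n) * (j + k + n + 1)) * f (j + k)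
  have hB : ∑ k ∈ range (n + 1), B k = ∑ k ∈ range (n + 1), B (k + 1) + B 0 := by
    rw [sum_range_succ', sum_range_succ (fun k ↦ B (k + 1))]
    simp [B, Nat.choose_succ_self]
  calc ((n : R) + 1) * (n + j + 1) *
        ∑ k ∈ range (n + 2), ((n + 1).choose k * (j + k).choose (n + 1) : R) * f (j + k)
      = ∑ k ∈ range (n + 1), (A k + B (k + 1)) + B 0 := by
        rw [mul_sum, sum_range_succ']
        congr 1
        · refine sum_congr rfl fun k _ ↦ ?_
          have hcoeff := coeff_succ_succ (R := R) n j k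
          simp only [A, B, ← add_assoc]
          push_cast at hcoeff ⊢
          linear_combination f (j + k + 1) * hcoeff
        · have hcoeff := Nat.cast_choose_succ_mul (R := R) j n
          simp only [B, Nat.choose_zero_right]
          push_cast
          linear_combination ((n : R) + j + 1) * f j * hcoeff
    _ = _ := by
        rw [sum_add_distrib, add_assoc, ← hB, ← sum_add_distrib, mul_sum]
        refine sum_congr rfl fun k _ ↦ ?_
        have shift := hf (j + k)
        simp only [A, B]
        push_cast at shift ⊢
        linear_combination (n.choose k * (j + k).choose n : R) * shift

theorem mul_eq_choose_mul_sum [IsDomain R] [CharZero R]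
    (hf : ∀ a : ℕ, ((a : R) + 1) ^ 2 * f (a + 1) = (x - a * (a + 1)) * f a) (hf0 : f 0 = 1)
    (i j : ℕ) :
    f i * f j =
      (i + j).choose i * ∑ k ∈ range (i + 1), (i.choose k * (j + k).choose i : R) * f (j + k) := by
  induction i with
  | zero => simp [hf0]
  | succ n ih =>
    have hpascal := congrArg (Nat.cast : ℕ → R) (Nat.add_one_mul_choose_eq (n + j) n)
    push_cast at hpascal
    apply mul_left_cancel₀ (pow_ne_zero 2 (Nat.cast_add_one_ne_zero n : (n : R) + 1 ≠ 0))
    calc ((n : R) + 1) ^ 2 * (f (n + 1) * f j)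
        = (x - n * (n + 1)) * (f n * f j) := by rw [← mul_assoc, hf n]; ring
      _ = (n + j).choose n * ((n + 1) * (n + j + 1) * ∑ k ∈ range (n + 2),
            ((n + 1).choose k * (j + k).choose (n + 1) : R) * f (j + k)) := by
          rw [ih, succ_mul_sum_eq hf]; ring
      _ = _ := by
          rw [show n + 1 + j = n + j + 1 by omega]
          linear_combination (∑ k ∈ range (n + 2),
            ((n + 1).choose k * (j + k).choose (n + 1) : R) * f (j + k)) * (n + 1) * hpascal

end NewtonProduct

/-- The coefficient of `t ^ a` in the Legendre polynomial `P_ℓ (1 + 2t)`. -/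
def legendreCoeff (ℓ a : ℕ) : ℕ := ℓ.choose a * (ℓ + a).choose a

theorem choose_two_mul_mul_choose (ℓ a : ℕ) :
    (ℓ + a).choose (2 * a) * (2 * a).choose a = legendreCoeff ℓ a := by
  rw [Nat.choose_mul (by omega), legendreCoeff, Nat.add_sub_cancel, two_mul, Nat.add_sub_cancel,
    mul_comm]

theorem legendreCoeff_succ {R : Type*} [CommRing R] (ℓ a : ℕ) :
    ((a : R) + 1) ^ 2 * legendreCoeff ℓ (a + 1) =
      (ℓ * (ℓ + 1) - a * (a + 1)) * legendreCoeff ℓ a := by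
  have hℓ := Nat.cast_choose_succ_mul (R := R) ℓ a
  have hℓa := congrArg (Nat.cast : ℕ → R) (Nat.add_one_mul_choose_eq (ℓ + a) a)
  simp only [legendreCoeff, ← add_assoc]
  push_cast at hℓa ⊢
  linear_combination
    ((ℓ + a + 1).choose (a + 1) : R) * (a + 1) * hℓ - (ℓ.choose a : R) * (ℓ - a) * hℓa

theorem choose_prod_expansion_general (ℓ i j : ℕ) :
    (ℓ + i).choose (2 * i) * (2 * i).choose i * (ℓ + j).choose (2 * j) * (2 * j).choose j =
      ∑ k ∈ Finset.range (i + 1),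
        (i + j).choose i * j.choose (i - k) * (j + k).choose k *
          (ℓ + j + k).choose (2 * j + 2 * k) * (2 * j + 2 * k).choose (j + k) := by
  have hprod : legendreCoeff ℓ i * legendreCoeff ℓ j = (i + j).choose i *
      ∑ k ∈ range (i + 1), i.choose k * (j + k).choose i * legendreCoeff ℓ (j + k) := by
    exact_mod_cast NewtonProduct.mul_eq_choose_mul_sum (f := fun a ↦ (legendreCoeff ℓ a : ℤ))
      (legendreCoeff_succ ℓ) (by simp [legendreCoeff]) i j
  rw [← choose_two_mul_mul_choose, ← choose_two_mul_mul_choose, ← mul_assoc] at hprod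
  rw [hprod, mul_sum]
  refine sum_congr rfl fun k hk ↦ ?_
  have hswap : (j + k).choose i * i.choose k = (j + k).choose k * j.choose (i - k) := by
    rw [Nat.choose_mul (by simpa [Nat.lt_succ_iff] using hk), Nat.add_sub_cancel]
  rw [← choose_two_mul_mul_choose, ← add_assoc, mul_add, mul_comm (i.choose k), hswap]
  ring

/-- For nonnegative integers `ℓ, i, j` with `i ≤ j`:
`C(ℓ+i,2i)·C(2i,i)·C(ℓ+j,2j)·C(2j,j)
  = ∑_{k=0}^{i} C(i+j,i)·C(j,i−k)·C(j+k,k)·C(ℓ+j+k,2j+2k)·C(2j+2k,j+k)`. -/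
theorem choose_prod_expansion (ℓ i j : ℕ) (h : i ≤ j) :
    (ℓ + i).choose (2 * i) * (2 * i).choose i * (ℓ + j).choose (2 * j) * (2 * j).choose j =
      ∑ k ∈ Finset.range (i + 1),
        (i + j).choose i * j.choose (i - k) * (j + k).choose k *
          (ℓ + j + k).choose (2 * j + 2 * k) * (2 * j + 2 * k).choose (j + k) :=
  choose_prod_expansion_general ℓ i j
end

section
/- For every positive integer r, every positive integer m, and all nonnegative integers i_1, …, i_m, there exist integers d_s (for max{i_1,…,i_m} ≤ s ≤ r(i_1+⋯+i_m), independent of k) such that for every nonnegative integer k one has ∏_{j=1}^{m} C(k+i_j, 2i_j)^r · C(2i_j, i_j) = ∑_{s=max{i_1,…,i_m}}^{r(i_1+⋯+i_m)} d_s · C(k+s, 2s) · C(2s, s). -/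
/-!
With `b_s(k) = C(k+s, 2s) C(2s, s)` one has `(s+1)² b_{s+1} = (k(k+1) - s(s+1)) b_s`, and
induction on `i` with this recurrence gives the linearization formula
`b_i b_u = ∑_s C(s,i) C(s,u) C(i+u,s) b_s`, whose coefficients vanish unless
`max i u ≤ s ≤ i + u`. The factor `C(k+j, 2j) = b_j / C(2j, j)` is not an integer combination of
the `b_s` by itself, but the linearization formula shows that `C(s,j) C(k+j, 2j) b_s` is one, with
coefficients again divisible by `C(·, j)`. So one multiplies in, for each `j`, first `b_{i_j}` and
then `r - 1` factors `C(k+i_j, 2i_j)`, keeping track of this divisibility.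
-/

open Finset

def binomBasis (s k : ℕ) : ℤ := ((k + s).choose (2 * s) : ℤ) * ((2 * s).choose s : ℤ)

def centeredChoose (j k : ℕ) : ℤ := ((k + j).choose (2 * j) : ℤ)

@[simp] lemma binomBasis_zero : binomBasis 0 = 1 := by
  ext k; simp [binomBasis]

lemma binomBasis_eq_zero_of_lt {s k : ℕ} (h : k < s) : binomBasis s k = 0 := by
  simp [binomBasis, Nat.choose_eq_zero_of_lt (by omega : k + s < 2 * s)]

lemma binomBasis_succ_apply (s k : ℕ) :
    ((s : ℤ) + 1) ^ 2 * binomBasis (s + 1) k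
      = ((k : ℤ) * (k + 1) - s * (s + 1)) * binomBasis s k := by
  obtain hks | ⟨t, rfl⟩ := lt_or_ge k s |>.imp_right Nat.exists_eq_add_of_le
  · rw [binomBasis_eq_zero_of_lt hks, binomBasis_eq_zero_of_lt (by omega)]
    ring
  have hcentral :
      ((s : ℤ) + 1) * (2 * s + 2).choose (s + 1) = 2 * (2 * s + 1) * (2 * s).choose s := by
    have := Nat.succ_mul_centralBinom_succ s
    simp only [Nat.centralBinom_eq_two_mul_choose] at this
    exact_mod_cast this
  have hup : ((2 * s + t : ℕ) + 1 : ℤ) * (2 * s + t).choose (2 * s + 1)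
      = (2 * s + t + 1).choose (2 * s + 2) * (2 * s + 2) := by
    exact_mod_cast Nat.add_one_mul_choose_eq (2 * s + t) (2 * s + 1)
  have hdown :
      ((2 * s + t).choose (2 * s + 1) : ℤ) * (2 * s + 1) = (2 * s + t).choose (2 * s) * t := by
    have := Nat.choose_succ_right_eq (2 * s + t) (2 * s)
    rw [Nat.add_sub_cancel_left] at this
    exact_mod_cast this
  simp only [binomBasis]
  rw [show s + t + (s + 1) = 2 * s + t + 1 by ring, show s + t + s = 2 * s + t by ring,
    show 2 * (s + 1) = 2 * s + 2 by ring]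
  push_cast at hup ⊢
  linear_combination ((s : ℤ) + 1) * ((2 * s + t + 1).choose (2 * s + 2) : ℤ) * hcentral
    - (2 * (s : ℤ) + 1) * ((2 * s).choose s : ℤ) * hup
    + ((2 * s).choose s : ℤ) * (2 * (s : ℤ) + t + 1) * hdown

lemma choose_succ_right_mul_int (n k : ℕ) :
    (n.choose (k + 1) : ℤ) * (k + 1) = n.choose k * ((n : ℤ) - k) := by
  rcases le_or_gt k n with h | h
  · have h' := congrArg (Nat.cast : ℕ → ℤ) (Nat.choose_succ_right_eq n k)
    push_cast [Nat.cast_sub h] at h'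
    exact h'
  · rw [Nat.choose_eq_zero_of_lt h, Nat.choose_eq_zero_of_lt (by omega)]
    simp

def linCoeff (i u s : ℕ) : ℤ :=
  (s.choose i : ℤ) * (s.choose u : ℤ) * ((i + u).choose s : ℤ)

lemma linCoeff_succ_succ (i u v : ℕ) :
    ((i : ℤ) + 1) ^ 2 * linCoeff (i + 1) u (v + 1)
      = ((v : ℤ) + 1) ^ 2 * linCoeff i u v
        + (((v : ℤ) + 1) * (v + 2) - i * (i + 1)) * linCoeff i u (v + 1) := by
  unfold linCoeff
  rw [show i + 1 + u = i + u + 1 by omega]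
  have h1 := choose_succ_right_mul_int (v + 1) i
  have h2 : ((i + u + 1).choose (v + 1) : ℤ) = (i + u).choose v + (i + u).choose (v + 1) := by
    exact_mod_cast Nat.choose_succ_succ (i + u) v
  have h3 := choose_succ_right_mul_int (i + u) v
  have h4 : ((v : ℤ) + 1) * v.choose i = (v + 1).choose (i + 1) * (i + 1) := by
    exact_mod_cast Nat.add_one_mul_choose_eq v i
  have h5 := choose_succ_right_mul_int (v + 1) u
  have h6 : ((v : ℤ) + 1) * v.choose u = (v + 1).choose (u + 1) * (u + 1) := by
    exact_mod_cast Nat.add_one_mul_choose_eq v u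
  push_cast at h1 h3 h5 ⊢
  linear_combination ((i : ℤ) + 1) ^ 2 * (v + 1).choose (i + 1) * (v + 1).choose u * h2
    + ((i : ℤ) + 1) * (v + 1).choose u * ((i + u).choose v + (i + u).choose (v + 1)) * h1
    - ((v : ℤ) + 1 - i) * (v + 1).choose i * (v + 1).choose u * h3
    - ((i + u).choose v : ℤ) * ((v : ℤ) + 1 - u) * (v + 1).choose u * (h1 + h4)
    - ((i + u).choose v : ℤ) * ((v : ℤ) + 1) * v.choose i * (h5 + h6)

lemma linCoeff_of_add_lt {i u s : ℕ} (h : i + u < s) : linCoeff i u s = 0 := by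
  simp [linCoeff, Nat.choose_eq_zero_of_lt h]

lemma binomBasis_mul_apply (i u k : ℕ) :
    binomBasis i k * binomBasis u k
      = ∑ s ∈ range (i + u + 1), linCoeff i u s * binomBasis s k := by
  induction i with
  | zero =>
    rw [zero_add, sum_range_succ, sum_eq_zero fun s hs => ?_]
    · simp [linCoeff]
    · simp [linCoeff, Nat.choose_eq_zero_of_lt (mem_range.mp hs)]
  | succ i ih =>
    -- after multiplying by `(i+1)²`, the recurrence expresses both sides through the `b_s` and
    -- `b_{s+1}`, and the coefficients then match by `linCoeff_succ_succ`
    set T := i + u + 1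
    have hsplit :
        ((k : ℤ) * (k + 1) - i * (i + 1)) * ∑ s ∈ range T, linCoeff i u s * binomBasis s k
        = ∑ s ∈ range T, ((s : ℤ) + 1) ^ 2 * linCoeff i u s * binomBasis (s + 1) k
          + ∑ s ∈ range T,
              ((s : ℤ) * (s + 1) - i * (i + 1)) * linCoeff i u s * binomBasis s k := by
      rw [mul_sum, ← sum_add_distrib]
      refine sum_congr rfl fun s _ => ?_
      linear_combination -linCoeff i u s * binomBasis_succ_apply s k
    have hshift : ∑ s ∈ range T, (((s + 1 : ℕ) : ℤ) * ((s + 1 : ℕ) + 1) - i * (i + 1))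
          * linCoeff i u (s + 1) * binomBasis (s + 1) k
        = ∑ s ∈ range T,
            ((s : ℤ) * (s + 1) - i * (i + 1)) * linCoeff i u s * binomBasis s k := by
      have h0 : ((i : ℤ) * (i + 1)) * linCoeff i u 0 = 0 := by
        cases i <;> simp [linCoeff]
      have h1 := sum_range_succ'
        (fun s => ((s : ℤ) * (s + 1) - i * (i + 1)) * linCoeff i u s * binomBasis s k) T
      have h2 := sum_range_succ
        (fun s => ((s : ℤ) * (s + 1) - i * (i + 1)) * linCoeff i u s * binomBasis s k) T
      rw [linCoeff_of_add_lt (by omega : i + u < T)] at h2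
      linear_combination h2 - h1 + binomBasis 0 k * h0
    have hcoeff :
        ((i : ℤ) + 1) ^ 2 * ∑ s ∈ range (T + 1), linCoeff (i + 1) u s * binomBasis s k
        = ∑ s ∈ range T, ((s : ℤ) + 1) ^ 2 * linCoeff i u s * binomBasis (s + 1) k
          + ∑ s ∈ range T, (((s + 1 : ℕ) : ℤ) * ((s + 1 : ℕ) + 1) - i * (i + 1))
            * linCoeff i u (s + 1) * binomBasis (s + 1) k := by
      rw [sum_range_succ', linCoeff, Nat.choose_eq_zero_of_lt (Nat.succ_pos i), mul_add, mul_sum,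
        ← sum_add_distrib]
      simp only [Nat.cast_zero, mul_zero, zero_mul, add_zero]
      refine sum_congr rfl fun s _ => ?_
      push_cast
      linear_combination binomBasis (s + 1) k * linCoeff_succ_succ i u s
    refine mul_left_cancel₀ (by positivity : ((i : ℤ) + 1) ^ 2 ≠ 0) ?_
    rw [show i + 1 + u + 1 = T + 1 by omega, hcoeff, hshift, ← hsplit, ← ih]
    linear_combination binomBasis u k * binomBasis_succ_apply i k

lemma choose_mul_choose_add_mul_choose_add {i u w : ℕ} (hw : w ≤ i) :
    u.choose i * (u + w).choose u * (i + u).choose (u + w)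
      = (2 * i).choose i * i.choose w * (u + i).choose (2 * i) := by
  rcases lt_or_ge u i with hu | hu
  · rw [Nat.choose_eq_zero_of_lt hu, Nat.choose_eq_zero_of_lt (by omega : u + i < 2 * i)]
    ring
  have e1 : (i + u).choose (u + w) * (u + w).choose u = (u + i).choose i * i.choose w := by
    rw [Nat.choose_mul (by omega), show i + u - u = i by omega, show u + w - u = w by omega,
      add_comm i u, Nat.choose_symm_add]
  have e2 : (u + i).choose (2 * i) * (2 * i).choose i = (u + i).choose i * u.choose i := by
    rw [Nat.choose_mul (by omega), show u + i - i = u by omega, show 2 * i - i = i by omega]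
  calc u.choose i * (u + w).choose u * (i + u).choose (u + w)
      = u.choose i * ((i + u).choose (u + w) * (u + w).choose u) := by ring
    _ = (u + i).choose i * u.choose i * i.choose w := by rw [e1]; ring
    _ = (2 * i).choose i * i.choose w * (u + i).choose (2 * i) := by rw [← e2]; ring

lemma choose_mul_centeredChoose_mul_binomBasis_apply (i s k : ℕ) :
    (s.choose i : ℤ) * centeredChoose i k * binomBasis s k
      = ∑ w ∈ range (i + 1),
          ((s + w).choose i * i.choose w * (s + i).choose (2 * i) : ℤ)
            * binomBasis (s + w) k := by
  refine mul_left_cancel₀ (by exact_mod_cast (Nat.choose_pos (by omega : i ≤ 2 * i)).ne' :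
    ((2 * i).choose i : ℤ) ≠ 0) ?_
  have hlhs : ((2 * i).choose i : ℤ) * ((s.choose i : ℤ) * centeredChoose i k * binomBasis s k)
      = (s.choose i : ℤ) * (binomBasis i k * binomBasis s k) := by
    simp only [centeredChoose, binomBasis]; ring
  rw [hlhs, binomBasis_mul_apply, mul_sum, mul_sum, show i + s + 1 = s + (i + 1) by omega,
    sum_range_add, sum_eq_zero fun v hv => ?_, zero_add]
  · refine sum_congr rfl fun w hw => ?_
    have key := choose_mul_choose_add_mul_choose_add (u := s) (Nat.lt_succ_iff.mp (mem_range.mp hw))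
    zify at key
    simp only [linCoeff]
    rw [add_comm i s] at *
    linear_combination ((s + w).choose i * binomBasis (s + w) k : ℤ) * key
  · simp [linCoeff, Nat.choose_eq_zero_of_lt (mem_range.mp hv)]

def binomSpan (j lo n : ℕ) : Submodule ℤ (ℕ → ℤ) :=
  Submodule.span ℤ ((fun s => (s.choose j : ℤ) • binomBasis s) '' Set.Icc lo n)

lemma binomSpan_mono {j lo lo' n n' : ℕ} (hlo : lo' ≤ lo) (hn : n ≤ n') :
    binomSpan j lo n ≤ binomSpan j lo' n' :=
  Submodule.span_mono (Set.image_mono (Set.Icc_subset_Icc hlo hn))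

lemma binomSpan_le_binomSpan_zero (j lo n : ℕ) : binomSpan j lo n ≤ binomSpan 0 lo n := by
  refine Submodule.span_le.mpr ?_
  rintro _ ⟨s, hs, rfl⟩
  exact Submodule.smul_mem _ _ (Submodule.subset_span ⟨s, hs, by simp⟩)

lemma Submodule.mul_mem_of_mem_span {R A : Type*} [CommSemiring R] [Semiring A] [Algebra R A]
    {S : Set A} {N : Submodule R A} {p f : A} (hf : f ∈ Submodule.span R S)
    (h : ∀ g ∈ S, p * g ∈ N) : p * f ∈ N :=
  (Submodule.span_le (p := N.comap (LinearMap.mulLeft R p))).mpr h hf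

lemma binomBasis_mul_binomBasis_mem (j s : ℕ) :
    binomBasis j * binomBasis s ∈ binomSpan j (max s j) (s + j) := by
  have hsum : binomBasis j * binomBasis s = ∑ v ∈ range (j + s + 1),
      (v.choose s * (j + s).choose v : ℤ) • ((v.choose j : ℤ) • binomBasis v) := by
    ext k
    simp only [Pi.mul_apply, binomBasis_mul_apply, Finset.sum_apply, Pi.smul_apply, smul_eq_mul,
      linCoeff]
    exact sum_congr rfl fun v _ => by ring
  rw [hsum]
  refine Submodule.sum_mem _ fun v hv => ?_
  by_cases hvs : max s j ≤ v
  · exact Submodule.smul_mem _ _ (Submodule.subset_span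
      ⟨v, ⟨hvs, by have := mem_range.mp hv; omega⟩, rfl⟩)
  · rcases lt_or_ge v s with h | h
    · simp [Nat.choose_eq_zero_of_lt h]
    · simp [Nat.choose_eq_zero_of_lt (by omega : v < j)]

lemma centeredChoose_mul_smul_binomBasis_mem (j s : ℕ) :
    centeredChoose j * (s.choose j : ℤ) • binomBasis s ∈ binomSpan j s (s + j) := by
  have hsum : centeredChoose j * (s.choose j : ℤ) • binomBasis s = ∑ w ∈ range (j + 1),
      (j.choose w * (s + j).choose (2 * j) : ℤ)
        • (((s + w).choose j : ℤ) • binomBasis (s + w)) := by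
    ext k
    simp only [Pi.mul_apply, Pi.smul_apply, smul_eq_mul, Finset.sum_apply]
    rw [← mul_assoc, mul_comm (centeredChoose j k),
      choose_mul_centeredChoose_mul_binomBasis_apply]
    exact sum_congr rfl fun w _ => by ring
  rw [hsum]
  refine Submodule.sum_mem _ fun w hw => Submodule.smul_mem _ _ (Submodule.subset_span
    ⟨s + w, ⟨by omega, by have := mem_range.mp hw; omega⟩, rfl⟩)

lemma mul_binomBasis_mem {f : ℕ → ℤ} {lo n : ℕ} (hf : f ∈ binomSpan 0 lo n) (j : ℕ) :
    f * binomBasis j ∈ binomSpan j (max lo j) (n + j) := by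
  rw [mul_comm]
  refine Submodule.mul_mem_of_mem_span hf ?_
  rintro _ ⟨s, hs, rfl⟩
  simp only [Nat.choose_zero_right, Nat.cast_one, one_smul]
  exact binomSpan_mono (max_le_max_right j hs.1) (by have := hs.2; omega)
    (binomBasis_mul_binomBasis_mem j s)

lemma mul_centeredChoose_pow_mem {f : ℕ → ℤ} {j lo n : ℕ} (hf : f ∈ binomSpan j lo n)
    (t : ℕ) :
    f * centeredChoose j ^ t ∈ binomSpan j lo (n + t * j) := by
  induction t with
  | zero => simpa using hf
  | succ t ih =>
    rw [pow_succ, ← mul_assoc, show n + (t + 1) * j = n + t * j + j by ring,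
      mul_comm (f * _)]
    refine Submodule.mul_mem_of_mem_span ih ?_
    rintro _ ⟨s, hs, rfl⟩
    exact binomSpan_mono hs.1 (by have := hs.2; omega) (centeredChoose_mul_smul_binomBasis_mem j s)

lemma prod_mem_binomSpan {ι : Type*} (S : Finset ι) (i : ι → ℕ) (t : ℕ) :
    ∏ j ∈ S, binomBasis (i j) * centeredChoose (i j) ^ t
      ∈ binomSpan 0 (S.sup i) ((t + 1) * ∑ j ∈ S, i j) := by
  classical
  induction S using Finset.induction_on with
  | empty => exact Submodule.subset_span ⟨0, by simp, by simp⟩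
  | insert a S ha ih =>
    rw [prod_insert ha, mul_comm (binomBasis (i a) * _), ← mul_assoc, sup_insert, sum_insert ha,
      sup_comm]
    refine binomSpan_le_binomSpan_zero (i a) _ _ ?_
    convert mul_centeredChoose_pow_mem (mul_binomBasis_mem ih (i a)) t using 2
    ring

lemma exists_eq_sum_of_mem_binomSpan_zero {f : ℕ → ℤ} {lo n : ℕ}
    (hf : f ∈ binomSpan 0 lo n) :
    ∃ d : ℕ → ℤ, f = ∑ s ∈ Icc lo n, d s • binomBasis s := by
  simp only [binomSpan, Nat.choose_zero_right, Nat.cast_one, one_smul, ← coe_Icc] at hf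
  obtain ⟨l, hl, rfl⟩ := (Finsupp.mem_span_image_iff_linearCombination ℤ).mp hf
  exact ⟨l, Finsupp.linearCombination_apply_of_mem_supported ℤ hl⟩

theorem prod_choose_pow_linear_combination_general (r m : ℕ) (hr : 0 < r)
    (i : Fin m → ℕ) :
    ∃ d : ℕ → ℤ, ∀ k : ℕ,
      (∏ j : Fin m,
        (((k + i j).choose (2 * i j) : ℤ)) ^ r * ((2 * (i j)).choose (i j) : ℤ)) =
        ∑ s ∈ Finset.Icc (Finset.univ.sup i) (r * ∑ j : Fin m, i j),
          d s * ((k + s).choose (2 * s) : ℤ) * ((2 * s).choose s : ℤ) := by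
  obtain ⟨t, rfl⟩ := Nat.exists_eq_add_one.mpr hr
  obtain ⟨d, hd⟩ := exists_eq_sum_of_mem_binomSpan_zero (prod_mem_binomSpan univ i t)
  refine ⟨d, fun k => ?_⟩
  have hk := congrFun hd k
  simp only [Finset.prod_apply, Finset.sum_apply, Pi.mul_apply, Pi.pow_apply, Pi.smul_apply,
    smul_eq_mul, binomBasis, centeredChoose] at hk
  convert hk using 2 <;> ring

/-- For a positive integer `r`, a positive integer `m`, and nonnegative integers
`i 1, …, i m`, there exist integers `d s` (independent of `k`) such that for all `k`:
`∏_{j=1}^{m} C(k+i_j,2i_j)^r·C(2i_j,i_j)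
  = ∑_{s=max i_j}^{r(i_1+⋯+i_m)} d s · C(k+s,2s)·C(2s,s)`. -/
theorem prod_choose_pow_linear_combination (r m : ℕ) (hr : 0 < r) (hm : 0 < m)
    (i : Fin m → ℕ) :
    ∃ d : ℕ → ℤ, ∀ k : ℕ,
      (∏ j : Fin m,
        (((k + i j).choose (2 * i j) : ℤ)) ^ r * ((2 * (i j)).choose (i j) : ℤ)) =
        ∑ s ∈ Finset.Icc (Finset.univ.sup i) (r * ∑ j : Fin m, i j),
          d s * ((k + s).choose (2 * s) : ℤ) * ((2 * s).choose s : ℤ) :=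
  prod_choose_pow_linear_combination_general r m hr i
end

section
/- For any positive integers r, m, n and any nonnegative integer a, every coefficient of the multivariable polynomial ∑_{k=0}^{n−1} (−1)^k (2k+1) · k^a · (k+1)^a · S_k^{(r)}(x_0,…,x_k)^m (a polynomial in x_0,…,x_{n−1} with integer coefficients) is divisible by n. -/
/-!
Put `B l k = C(k+l, 2l) C(2l, l) = C(k+l, l) C(k, l)`. The alternating sum
`∑_{k ≤ n} (-1)^k (2k+1) B l k` equals `(-1)^n (n+1) C(n+1+l, l) C(n, l)`, so every `ℤ`-linear
combination `f` of the functions `B l` satisfies `n ∣ ∑_{k < n} (-1)^k (2k+1) f k`.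
These combinations form a ring, since `B i · B j = ∑_l C(l,i) C(l,j) C(i+j,l) B l`. It contains
`k(k+1) = B 1 k`, and for `r ≥ 1` the coefficients `C(k+j, 2j)^r C(2j, j)` of the Schmidt
polynomials: multiplication by `C(k+j, 2j) = B j k / C(2j, j)` preserves the span of the
`C(l, j) • B l`, because `C(l,j) C(l+v,l) C(l+j,l+v) = C(2j,j) C(l+j,2j) C(j,v)`. So every
coefficient of the summand, as a function of `k`, is such a combination.
-/

namespace MvPolynomial

variable {ι σ R : Type*} [CommSemiring R] (A : Subalgebra R (ι → R))

lemma coeff_mul_mem_of_coeff_mem {p q : ι → MvPolynomial σ R}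
    (hp : ∀ d, (fun i => coeff d (p i)) ∈ A) (hq : ∀ d, (fun i => coeff d (q i)) ∈ A)
    (d : σ →₀ ℕ) : (fun i => coeff d (p i * q i)) ∈ A := by
  classical
  simp only [coeff_mul, ← Finset.sum_fn]
  exact Subalgebra.sum_mem _ fun x _ => Subalgebra.mul_mem _ (hp x.1) (hq x.2)

lemma coeff_pow_mem_of_coeff_mem {p : ι → MvPolynomial σ R}
    (hp : ∀ d, (fun i => coeff d (p i)) ∈ A) (m : ℕ) (d : σ →₀ ℕ) :
    (fun i => coeff d (p i ^ m)) ∈ A := by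
  induction m generalizing d with
  | zero =>
    classical
    simp only [pow_zero, coeff_one]
    split_ifs
    exacts [A.one_mem, A.zero_mem]
  | succ m ih => simpa only [pow_succ] using coeff_mul_mem_of_coeff_mem A ih hp d

end MvPolynomial

namespace Nat

lemma cast_sub_mul_choose (N i : ℕ) :
    ((N : ℤ) - i) * N.choose i = (i + 1) * N.choose (i + 1) := by
  rcases le_or_gt i N with h | h
  · have := choose_succ_right_eq N i
    zify [h] at this
    linarith
  · simp [choose_eq_zero_of_lt h, choose_eq_zero_of_lt (lt_succ_of_lt h)]

lemma cast_add_one_mul_choose_s15 (N i : ℕ) :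
    ((N : ℤ) + 1) * N.choose i = (i + 1) * (N + 1).choose (i + 1) := by
  have := add_one_mul_choose_eq N i
  push_cast [mul_comm] at this ⊢
  linarith

end Nat

namespace Schmidt

open Finset

def B (l k : ℕ) : ℤ := ((k + l).choose (2 * l) : ℤ) * (2 * l).choose l

lemma B_eq_choose_mul_choose (l k : ℕ) : B l k = (k + l).choose l * k.choose l := by
  have h := Nat.choose_mul (n := k + l) (k := 2 * l) (s := l) (by omega)
  rw [show k + l - l = k by omega, show 2 * l - l = l by omega] at h
  rw [B]
  exact_mod_cast h

lemma B_zero : B 0 = 1 := by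
  funext k
  simp [B]

lemma B_one (k : ℕ) : B 1 k = k * (k + 1) := by
  rw [B_eq_choose_mul_choose, Nat.choose_one_right, Nat.choose_one_right]
  push_cast
  ring

-- `B t k = ∏_{i<t} (k(k+1) - i(i+1)) / t!²`, whence this recurrence.
lemma sub_mul_B (t k : ℕ) :
    ((k : ℤ) * (k + 1) - t * (t + 1)) * B t k = (t + 1) ^ 2 * B (t + 1) k := by
  have e1 := Nat.cast_add_one_mul_choose_s15 (k + t) t
  have e2 := Nat.cast_sub_mul_choose k t
  rw [B_eq_choose_mul_choose, B_eq_choose_mul_choose, ← add_assoc]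
  push_cast at e1 ⊢
  linear_combination ((k : ℤ) - t) * (k.choose t : ℤ) * e1
    + ((t : ℤ) + 1) * ((k + t + 1).choose (t + 1) : ℤ) * e2

def linCoeff (i j l : ℕ) : ℤ := (l.choose i : ℤ) * l.choose j * (i + j).choose l

-- At `l = 0` the truncated `l - 1` is harmless: its term carries the factor `l ^ 2`.
lemma linCoeff_succ_left (i j l : ℕ) :
    ((l : ℤ) * (l + 1) - i * (i + 1)) * linCoeff i j l + l ^ 2 * linCoeff i j (l - 1)
      = (i + 1) ^ 2 * linCoeff (i + 1) j l := by
  cases l with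
  | zero => rcases i with _ | i <;> simp [linCoeff]
  | succ l =>
    have h_a := Nat.cast_sub_mul_choose (l + 1) i
    have h_c := Nat.cast_sub_mul_choose (i + j) l
    have h_b := Nat.cast_add_one_mul_choose_s15 l i
    have h_d : ((l : ℤ) + 1) * l.choose j = ((l : ℤ) + 1 - j) * (l + 1).choose j := by
      have := Nat.cast_sub_mul_choose (l + 1) j
      push_cast at this
      rw [Nat.cast_add_one_mul_choose_s15, this]
    have pascal : ((i + j + 1).choose (l + 1) : ℤ) = (i + j).choose l + (i + j).choose (l + 1) := by
      exact_mod_cast Nat.choose_succ_succ (i + j) l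
    simp only [linCoeff, Nat.add_sub_cancel, show i + 1 + j = i + j + 1 by omega]
    push_cast at h_a h_c ⊢
    linear_combination ((i + j).choose l : ℤ) * (((l : ℤ) + 1) * l.choose j) * h_b
      + ((i + j).choose l : ℤ) * ((i + 1) * (l + 1).choose (i + 1)) * h_d
      - ((i : ℤ) + 1) ^ 2 * ((l + 1).choose (i + 1) : ℤ) * ((l + 1).choose j : ℤ) * pascal
      - ((i : ℤ) + 1) * ((l + 1).choose (i + 1) : ℤ) * ((l + 1).choose j : ℤ) * h_c
      + ((l : ℤ) + i + 2) * ((i + j).choose (l + 1) : ℤ) * ((l + 1).choose j : ℤ) * h_a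

lemma B_mul_B (i j k : ℕ) :
    B i k * B j k = ∑ l ∈ range (i + j + 1), linCoeff i j l * B l k := by
  induction i with
  | zero =>
    rw [B_zero, Pi.one_apply, one_mul, zero_add, sum_range_succ,
      sum_eq_zero fun l hl => by simp [linCoeff, Nat.choose_eq_zero_of_lt (mem_range.1 hl)]]
    simp [linCoeff]
  | succ i ih =>
    set c := linCoeff i j
    have hM : c (i + j + 1) = 0 := by simp [c, linCoeff]
    refine mul_left_cancel₀ (by positivity : ((i : ℤ) + 1) ^ 2 ≠ 0) ?_
    calc ((i : ℤ) + 1) ^ 2 * (B (i + 1) k * B j k)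
        = ((k : ℤ) * (k + 1) - i * (i + 1)) * (B i k * B j k) := by
          linear_combination (-B j k) * sub_mul_B i k
      _ = ∑ l ∈ range (i + j + 1), c l * (((l : ℤ) * (l + 1) - i * (i + 1)) * B l k)
            + ∑ l ∈ range (i + j + 1), c l * ((l + 1) ^ 2 * B (l + 1) k) := by
          rw [ih, mul_sum, ← sum_add_distrib]
          refine sum_congr rfl fun l _ => ?_
          linear_combination c l * sub_mul_B l k
      _ = ∑ l ∈ range (i + j + 2), (((l : ℤ) * (l + 1) - i * (i + 1)) * c l * B l k
            + l ^ 2 * c (l - 1) * B l k) := by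
          rw [sum_add_distrib, sum_range_succ _ (i + j + 1), sum_range_succ' _ (i + j + 1), hM]
          push_cast
          simp only [mul_zero, zero_mul, add_zero]
          congr 1 <;> exact sum_congr rfl fun l _ => by ring
      _ = ((i : ℤ) + 1) ^ 2 * ∑ l ∈ range (i + 1 + j + 1), linCoeff (i + 1) j l * B l k := by
          rw [mul_sum, show i + 1 + j + 1 = i + j + 2 by omega]
          refine sum_congr rfl fun l _ => ?_
          rw [← add_mul, linCoeff_succ_left]
          ring

lemma sum_range_succ_alternating_B (j n : ℕ) :
    ∑ k ∈ range (n + 1), (-1 : ℤ) ^ k * (2 * k + 1) * B j k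
      = (-1) ^ n * (n + 1) * (n + 1 + j).choose j * (n.choose j) := by
  induction n with
  | zero => rcases j with _ | j <;> simp [B_eq_choose_mul_choose]
  | succ n ih =>
    have h1 : ((n : ℤ) + 1 + 1) * (n + 1 + 1 + j).choose j
        = (n + 1 + j + 1) * (n + 1 + j).choose j := by
      have := Nat.cast_add_one_mul_choose_s15 (n + 1 + j) (n + 1)
      rw [Nat.choose_symm_add, show n + 1 + j + 1 = n + 1 + 1 + j by omega,
        Nat.choose_symm_add] at this
      push_cast at this ⊢
      linarith
    have h2 : ((n : ℤ) + 1) * n.choose j = (n + 1 - j) * (n + 1).choose j := by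
      rw [Nat.cast_add_one_mul_choose_s15, ← Nat.cast_sub_mul_choose]
      push_cast
      ring
    rw [sum_range_succ, ih, B_eq_choose_mul_choose]
    push_cast at h1 h2 ⊢
    linear_combination (-1 : ℤ) ^ n * ((n + 1).choose j : ℤ) * h1
      + (-1 : ℤ) ^ n * ((n + 1 + j).choose j : ℤ) * h2

lemma choose_mul_choose_mul_choose_add (j l v : ℕ) :
    (l.choose j : ℤ) * (l + v).choose l * (l + j).choose (l + v)
      = (2 * j).choose j * (l + j).choose (2 * j) * j.choose v := by
  have h := Nat.choose_mul (n := l + j) (k := l + v) (s := l) (by omega)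
  rw [Nat.add_sub_cancel_left, Nat.add_sub_cancel_left, Nat.choose_symm_add (a := l) (b := j)] at h
  have hB := B_eq_choose_mul_choose j l
  rw [B] at hB
  rw [mul_assoc, ← Nat.cast_mul, mul_comm ((l + v).choose l), h]
  push_cast
  linear_combination (j.choose v : ℤ) * hB.symm

lemma choose_mul_B (j l k : ℕ) :
    ((k + j).choose (2 * j) : ℤ) * ((l.choose j : ℤ) * B l k)
      = ∑ v ∈ range (j + 1),
          ((l + j).choose (2 * j) * j.choose v : ℤ) * ((l + v).choose j * B (l + v) k) := by
  refine mul_left_cancel₀ (a := ((2 * j).choose j : ℤ))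
    (by exact_mod_cast (Nat.choose_pos (by omega)).ne') ?_
  have hlow : ∑ u ∈ range l, linCoeff l j u * B u k = 0 :=
    sum_eq_zero fun u hu => by
      simp [linCoeff, Nat.choose_eq_zero_of_lt (mem_range.1 hu)]
  calc ((2 * j).choose j : ℤ) * (((k + j).choose (2 * j) : ℤ) * ((l.choose j : ℤ) * B l k))
        = l.choose j * (B l k * B j k) := by
          rw [show B j k = ((k + j).choose (2 * j) : ℤ) * (2 * j).choose j from rfl]
          ring
    _ = l.choose j * ∑ v ∈ range (j + 1), linCoeff l j (l + v) * B (l + v) k := by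
          rw [B_mul_B, add_assoc, sum_range_add, hlow, zero_add]
    _ = _ := by
          rw [mul_sum, mul_sum]
          refine sum_congr rfl fun v _ => ?_
          rw [linCoeff]
          linear_combination ((l + v).choose j * B (l + v) k : ℤ)
            * choose_mul_choose_mul_choose_add j l v

open Submodule

def bSpan : Submodule ℤ (ℕ → ℤ) := span ℤ (Set.range B)

lemma B_mem_bSpan (l : ℕ) : B l ∈ bSpan := subset_span ⟨l, rfl⟩

lemma mul_mem_bSpan {f g : ℕ → ℤ} (hf : f ∈ bSpan) (hg : g ∈ bSpan) : f * g ∈ bSpan := by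
  have hle : bSpan * bSpan ≤ bSpan := by
    rw [bSpan, span_mul_span, span_le]
    rintro _ ⟨_, ⟨i, rfl⟩, _, ⟨j, rfl⟩, rfl⟩
    change B i * B j ∈ span ℤ (Set.range B)
    have : B i * B j = ∑ l ∈ range (i + j + 1), linCoeff i j l • B l := by
      funext k
      simp [B_mul_B]
    rw [this]
    exact sum_mem fun l _ => smul_mem _ _ (B_mem_bSpan l)
  exact hle (mul_mem_mul hf hg)

def bAlgebra : Subalgebra ℤ (ℕ → ℤ) :=
  bSpan.toSubalgebra (B_zero ▸ B_mem_bSpan 0) fun _ _ => mul_mem_bSpan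

def chooseSpan (j : ℕ) : Submodule ℤ (ℕ → ℤ) :=
  span ℤ (Set.range fun l => (l.choose j : ℤ) • B l)

lemma chooseSpan_le_bSpan (j : ℕ) : chooseSpan j ≤ bSpan :=
  span_le.2 <| Set.range_subset_iff.2 fun l => smul_mem _ _ (B_mem_bSpan l)

lemma B_mem_chooseSpan (j : ℕ) : B j ∈ chooseSpan j := by
  have h : (j.choose j : ℤ) • B j ∈ chooseSpan j := subset_span ⟨j, rfl⟩
  rwa [Nat.choose_self, Nat.cast_one, one_smul] at h

lemma choose_mul_mem_chooseSpan (j : ℕ) {f : ℕ → ℤ} (hf : f ∈ chooseSpan j) :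
    (fun k => ((k + j).choose (2 * j) : ℤ)) * f ∈ chooseSpan j := by
  induction hf using span_induction with
  | mem _ h =>
    obtain ⟨l, rfl⟩ := h
    have : (fun k => ((k + j).choose (2 * j) : ℤ)) * (l.choose j : ℤ) • B l
        = ∑ v ∈ range (j + 1), ((l + j).choose (2 * j) * j.choose v : ℤ)
            • ((l + v).choose j : ℤ) • B (l + v) := by
      funext k
      simp [choose_mul_B]
    rw [this]
    exact sum_mem fun v _ => smul_mem _ _ (subset_span ⟨l + v, rfl⟩)
  | zero => simp
  | add f g _ _ hf hg => simpa [mul_add] using add_mem hf hg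
  | smul a f _ hf => rw [mul_smul_comm]; exact smul_mem _ a hf

lemma choose_pow_mul_mem_bAlgebra (j : ℕ) {r : ℕ} (hr : 0 < r) :
    (fun k => ((k + j).choose (2 * j) : ℤ) ^ r * (2 * j).choose j) ∈ bAlgebra := by
  obtain ⟨s, rfl⟩ := Nat.exists_eq_add_of_lt hr
  have hs : ∀ s : ℕ, (fun k => ((k + j).choose (2 * j) : ℤ)) ^ s * B j ∈ chooseSpan j := by
    intro s
    induction s with
    | zero => simpa using B_mem_chooseSpan j
    | succ s ih => simpa [pow_succ', mul_assoc] using choose_mul_mem_chooseSpan j ih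
  refine chooseSpan_le_bSpan j ?_
  convert hs s using 1
  funext k
  simp only [zero_add, pow_succ, Pi.mul_apply, Pi.pow_apply, B]
  ring

lemma dvd_sum_alternating_of_mem_bSpan {f : ℕ → ℤ} (hf : f ∈ bSpan) (n : ℕ) :
    (n : ℤ) ∣ ∑ k ∈ range n, (-1) ^ k * (2 * k + 1) * f k := by
  induction hf using span_induction with
  | mem _ h =>
    obtain ⟨j, rfl⟩ := h
    cases n with
    | zero => simp
    | succ n =>
      rw [sum_range_succ_alternating_B]
      exact ⟨(-1) ^ n * (n + 1 + j).choose j * n.choose j, by push_cast; ring⟩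
  | zero => simp
  | add f g _ _ hf hg =>
    simpa [mul_add, sum_add_distrib] using dvd_add hf hg
  | smul a f _ hf =>
    simpa [mul_left_comm _ a, ← mul_sum] using dvd_mul_of_dvd_right hf a

open MvPolynomial

lemma coeff_schmidtMv (r k : ℕ) (d : ℕ →₀ ℕ) :
    coeff d (schmidtMv r k) = ∑ j ∈ range (k + 1),
      if Finsupp.single j 1 = d then ((k + j).choose (2 * j) : ℤ) ^ r * (2 * j).choose j
      else 0 := by
  simp only [schmidtMv, coeff_sum, coeff_C_mul, coeff_X, mul_ite, mul_one, mul_zero,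
    Nat.cast_mul, Nat.cast_pow]

lemma coeff_single_schmidtMv {r : ℕ} (hr : 0 < r) (j k : ℕ) :
    coeff (Finsupp.single j 1) (schmidtMv r k)
      = ((k + j).choose (2 * j) : ℤ) ^ r * (2 * j).choose j := by
  simp only [coeff_schmidtMv, Finsupp.single_left_inj one_ne_zero, sum_ite_eq', mem_range]
  split_ifs with hj
  · rfl
  · simp [Nat.choose_eq_zero_of_lt (show k + j < 2 * j by omega), hr.ne']

lemma coeff_schmidtMv_of_forall_ne {d : ℕ →₀ ℕ} (hd : ∀ j, Finsupp.single j 1 ≠ d) (r k : ℕ) :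
    coeff d (schmidtMv r k) = 0 := by
  simp [coeff_schmidtMv, hd]

lemma coeff_schmidtMv_mem_bAlgebra {r : ℕ} (hr : 0 < r) (d : ℕ →₀ ℕ) :
    (fun k => coeff d (schmidtMv r k)) ∈ bAlgebra := by
  by_cases hd : ∃ j, Finsupp.single j 1 = d
  · obtain ⟨j, rfl⟩ := hd
    simpa only [coeff_single_schmidtMv hr] using choose_pow_mul_mem_bAlgebra j hr
  · push Not at hd
    simp only [coeff_schmidtMv_of_forall_ne hd]
    exact bAlgebra.zero_mem

end Schmidt

theorem sum_alt_schmidtMv_pow_weighted_dvd_general (r m n a : ℕ) (hr : 0 < r) :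
    ∀ d : ℕ →₀ ℕ,
      (n : ℤ) ∣ MvPolynomial.coeff d
        (∑ k ∈ Finset.range n,
          ((-1 : ℤ) ^ k * (2 * (k : ℤ) + 1) * (k : ℤ) ^ a * ((k : ℤ) + 1) ^ a) •
            (schmidtMv r k) ^ m) := by
  intro d
  have hweight : (fun k : ℕ => (k : ℤ) ^ a * ((k : ℤ) + 1) ^ a) ∈ Schmidt.bAlgebra := by
    convert Schmidt.bAlgebra.pow_mem (Schmidt.B_mem_bSpan 1) a using 1
    funext k
    simp [Schmidt.B_one, mul_pow]
  have hf := Schmidt.bAlgebra.mul_mem hweight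
    (MvPolynomial.coeff_pow_mem_of_coeff_mem _ (Schmidt.coeff_schmidtMv_mem_bAlgebra hr) m d)
  rw [MvPolynomial.coeff_sum]
  convert Schmidt.dvd_sum_alternating_of_mem_bSpan hf n using 2 with k
  rw [MvPolynomial.coeff_smul, smul_eq_mul, Pi.mul_apply]
  ring

/-- For positive integers `r`, `m`, `n` and a nonnegative integer `a`, every coefficient of
`∑_{k=0}^{n−1} (−1)^k(2k+1)·k^a·(k+1)^a·S_k^{(r)}(x_0,…,x_k)^m` is divisible by `n`. -/
theorem sum_alt_schmidtMv_pow_weighted_dvd (r m n a : ℕ) (hr : 0 < r) (hm : 0 < m)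
    (hn : 0 < n) :
    ∀ d : ℕ →₀ ℕ,
      (n : ℤ) ∣ MvPolynomial.coeff d
        (∑ k ∈ Finset.range n,
          ((-1 : ℤ) ^ k * (2 * (k : ℤ) + 1) * (k : ℤ) ^ a * ((k : ℤ) + 1) ^ a) •
            (schmidtMv r k) ^ m) :=
  sum_alt_schmidtMv_pow_weighted_dvd_general r m n a hr
end
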